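/- arXiv:1312.0722 — 10 statements merged into one kernel-verified Lean document; each statement's English description precedes it below -/
import Mathlib

section
/- Suppose balls are distributed uniformly at random among S slots, injectively (at most one ball per slot), with the slots partitioned into bins, one designated bin having w slots. If l+1 ≤ n balls and each bin has Θ(n^3) slots (so S ≥ n · n^3), then conditioning on any event E determined by the placements of l of the balls with P[E] > 0, the probability that a fixed additional ball lands in a fixed bin of w slots is between (w - l)/S and w/(S - l). -/
open Finset

/-- Balls placed uniformly at random, injectively, into `S` slots partitioned into
bins (via `bin`), each bin having at least `n^3` slots. Conditioning on any event `E`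
determined by the bins of the first `l` balls, the probability that the last ball
lands in a fixed bin `b` of `w` slots lies between `(w - l)/S` and `w/(S - l)`. -/
theorem conditional_bin_probability (n l S : ℕ) (hl : l + 1 ≤ n)
    (bin : Fin S → Fin (n + 1))
    (hbin : ∀ b : Fin (n + 1), n ^ 3 ≤ (Finset.univ.filter (fun s => bin s = b)).card)
    (b : Fin (n + 1)) (w : ℕ)
    (hw : w = (Finset.univ.filter (fun s => bin s = b)).card)
    (E : Finset (Fin (l + 1) ↪ Fin S))
    (hE : ∀ f g : Fin (l + 1) ↪ Fin S,
      (∀ i : Fin l, bin (f i.castSucc) = bin (g i.castSucc)) → (f ∈ E ↔ g ∈ E))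
    (hEne : E.Nonempty) :
    ((w : ℝ) - l) / S ≤
      ((E.filter (fun f => bin (f (Fin.last l)) = b)).card : ℝ) / E.card ∧
    ((E.filter (fun f => bin (f (Fin.last l)) = b)).card : ℝ) / E.card ≤
      (w : ℝ) / ((S : ℝ) - l) := by
  classical
  obtain ⟨f₀, hf₀⟩ := hEne
  have hSl : l + 1 ≤ S := by simpa using Fintype.card_le_of_embedding f₀
  have hwl : l + 1 ≤ w := by
    have h1 : n ≤ n ^ 3 := Nat.le_self_pow (by norm_num) n
    have h2 := hbin b
    omega
  set res : (Fin (l + 1) ↪ Fin S) → (Fin l ↪ Fin S) :=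
    fun f => ⟨fun i => f i.castSucc, fun i j h => by
      simpa using Fin.castSucc_injective _ (f.injective h)⟩ with hres
  set R : Finset (Fin l ↪ Fin S) := E.image res with hRdef
  -- fiber lemma: fibers of `res` over `E` biject (via evaluation at last) with
  -- slots outside the range of `r`.
  have fiber : ∀ r ∈ R, ∀ p : Fin S → Prop,
      (E.filter (fun f => res f = r ∧ p (f (Fin.last l)))).card
        = (univ.filter (fun s => (∀ i : Fin l, r i ≠ s) ∧ p s)).card := by
    intro r hr p
    obtain ⟨f0, hf0, hrf0⟩ := Finset.mem_image.mp hr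
    apply Finset.card_bij (fun f _ => f (Fin.last l))
    · intro f hf
      simp only [mem_filter, mem_univ, true_and] at hf ⊢
      obtain ⟨hfE, hfr, hp⟩ := hf
      refine ⟨fun i hi => ?_, hp⟩
      subst hfr
      have : (i.castSucc : Fin (l+1)) = Fin.last l := f.injective hi
      exact absurd this (Fin.castSucc_lt_last i).ne
    · intro f hf g hg hfg
      simp only [mem_filter] at hf hg
      ext x
      induction x using Fin.lastCases with
      | last => exact congrArg Fin.val hfg
      | cast i =>
        have h1 : res f i = res g i := by rw [hf.2.1, hg.2.1]
        exact congrArg Fin.val h1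
    · intro s hs
      simp only [mem_filter, mem_univ, true_and] at hs
      obtain ⟨hns, hps⟩ := hs
      have hinj : Function.Injective (Fin.snoc (fun i : Fin l => r i) s :
          Fin (l + 1) → Fin S) := by
        intro a a' h
        induction a using Fin.lastCases with
        | last =>
          induction a' using Fin.lastCases with
          | last => rfl
          | cast j =>
            rw [Fin.snoc_last, Fin.snoc_castSucc] at h
            exact absurd h.symm (hns j)
        | cast i =>
          induction a' using Fin.lastCases with
          | last =>
            rw [Fin.snoc_last, Fin.snoc_castSucc] at h
            exact absurd h (hns i)
          | cast j =>
            rw [Fin.snoc_castSucc, Fin.snoc_castSucc] at h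
            exact congrArg Fin.castSucc (r.injective h)
      refine ⟨⟨Fin.snoc (fun i : Fin l => r i) s, hinj⟩, ?_, by simp⟩
      have hresg : res ⟨Fin.snoc (fun i : Fin l => r i) s, hinj⟩ = r := by
        ext i
        simp [hres]
      refine Finset.mem_filter.mpr ⟨?_, hresg, by simpa using hps⟩
      refine (hE _ f0 ?_).mpr hf0
      intro i
      have h1 : (⟨Fin.snoc (fun i : Fin l => r i) s, hinj⟩ :
          Fin (l+1) ↪ Fin S) i.castSucc = r i := by simp
      have h2 : f0 i.castSucc = r i := by rw [← hrf0]; rfl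
      rw [h1, h2]
  -- cardinality of the complement of the range of an embedding
  have card_compl : ∀ r : Fin l ↪ Fin S,
      (univ.filter (fun s => ∀ i : Fin l, r i ≠ s)).card = S - l := by
    intro r
    have h1 : (univ.filter (fun s => ∀ i : Fin l, r i ≠ s))
        = univ \ (univ.image r) := by
      ext s
      simp [eq_comm, not_exists]
    rw [h1, Finset.card_sdiff_of_subset (Finset.subset_univ _),
      Finset.card_image_of_injective _ r.injective]
    simp
  -- per-fiber count of the plain fibers
  have fiber_plain : ∀ r ∈ R, (E.filter (fun f => res f = r)).card = S - l := by
    intro r hr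
    have := fiber r hr (fun _ => True)
    simpa [card_compl r] using this
  -- per-fiber bounds for the good fibers
  have fiber_good : ∀ r ∈ R,
      w - l ≤ (E.filter (fun f => res f = r ∧ bin (f (Fin.last l)) = b)).card ∧
      (E.filter (fun f => res f = r ∧ bin (f (Fin.last l)) = b)).card ≤ w := by
    intro r hr
    have hfib : (E.filter (fun f => res f = r ∧ bin (f (Fin.last l)) = b)).card
        = (univ.filter (fun s => (∀ i : Fin l, r i ≠ s) ∧ bin s = b)).card := by
      have h0 := fiber r hr (fun s => bin s = b)
      convert h0 using 2 <;> (ext x; simp [Finset.mem_filter])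
    have hsub : (univ.filter (fun s => (∀ i : Fin l, r i ≠ s) ∧ bin s = b))
        = (univ.filter (fun s => bin s = b)) \ (univ.image r) := by
      ext s
      simp only [mem_filter, mem_univ, true_and, mem_sdiff, mem_image, not_exists]
      tauto
    have h2 : (univ.image r).card = l := by
      rw [Finset.card_image_of_injective _ r.injective]; simp
    have hlow : w - l ≤ (univ.filter
        (fun s => (∀ i : Fin l, r i ≠ s) ∧ bin s = b)).card := by
      rw [hsub]
      have h1 := Finset.card_le_card_sdiff_add_card
        (s := univ.filter (fun s => bin s = b)) (t := univ.image r)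
      omega
    have hhigh : (univ.filter
        (fun s => (∀ i : Fin l, r i ≠ s) ∧ bin s = b)).card ≤ w := by
      rw [hsub]
      calc ((univ.filter (fun s => bin s = b)) \ (univ.image r)).card
          ≤ (univ.filter (fun s => bin s = b)).card :=
            Finset.card_le_card (Finset.sdiff_subset)
        _ = w := hw.symm
    exact ⟨le_of_le_of_eq hlow hfib.symm, le_of_eq_of_le hfib hhigh⟩
  -- total count
  have hmapsto : ∀ f ∈ E, res f ∈ R := fun f hf => Finset.mem_image_of_mem res hf
  have hEcard : E.card = R.card * (S - l) := by
    rw [Finset.card_eq_sum_card_fiberwise hmapsto]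
    rw [Finset.sum_congr rfl (fun r hr => fiber_plain r hr)]
    simp [mul_comm]
  set G : Finset (Fin (l + 1) ↪ Fin S) :=
    E.filter (fun f => bin (f (Fin.last l)) = b) with hGdef
  have hGcard : G.card = ∑ r ∈ R, (E.filter
      (fun f => res f = r ∧ bin (f (Fin.last l)) = b)).card := by
    rw [Finset.card_eq_sum_card_fiberwise
      (fun f hf => hmapsto f (Finset.mem_filter.mp hf).1)]
    refine Finset.sum_congr rfl (fun r hr => ?_)
    congr 1
    rw [Finset.filter_filter]
    exact Finset.filter_congr (fun f _ => by tauto)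
  have hGlow : R.card * (w - l) ≤ G.card := by
    rw [hGcard]
    calc R.card * (w - l) = ∑ _r ∈ R, (w - l) := by rw [Finset.sum_const, smul_eq_mul]
      _ ≤ _ := Finset.sum_le_sum (fun r hr => (fiber_good r hr).1)
  have hGhigh : G.card ≤ R.card * w := by
    rw [hGcard]
    calc (∑ r ∈ R, (E.filter
        (fun f => res f = r ∧ bin (f (Fin.last l)) = b)).card)
        ≤ ∑ _r ∈ R, w := Finset.sum_le_sum (fun r hr => (fiber_good r hr).2)
      _ = R.card * w := by rw [Finset.sum_const, smul_eq_mul]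
  have hRpos : 0 < R.card := by
    rw [hRdef, Finset.card_pos]
    exact ⟨res f₀, Finset.mem_image_of_mem res hf₀⟩
  -- now real arithmetic
  have hDpos : 0 < S - l := by omega
  have hTposN : 0 < E.card := by rw [hEcard]; exact Nat.mul_pos hRpos hDpos
  have hTpos : (0:ℝ) < (E.card : ℝ) := by exact_mod_cast hTposN
  have hSpos : (0:ℝ) < (S:ℝ) := by exact_mod_cast (by omega : 0 < S)
  have hSlR : (0:ℝ) < (S:ℝ) - l := by
    have : (l:ℝ) < S := by exact_mod_cast (by omega : l < S)
    linarith
  have hEc : ((E.card : ℝ)) = (R.card : ℝ) * ((S:ℝ) - l) := by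
    rw [hEcard]; push_cast [Nat.cast_sub (by omega : l ≤ S)]; ring
  have hG1 : (R.card : ℝ) * ((w:ℝ) - l) ≤ (G.card : ℝ) := by
    have h := (Nat.cast_le (α := ℝ)).mpr hGlow
    push_cast [Nat.cast_sub (by omega : l ≤ w)] at h
    linarith
  have hG2 : (G.card : ℝ) ≤ (R.card : ℝ) * w := by exact_mod_cast hGhigh
  have hK : (0:ℝ) < (R.card:ℝ) := by exact_mod_cast hRpos
  have hwlR : (0:ℝ) ≤ (w:ℝ) - l := by
    have : (l:ℝ) ≤ w := by exact_mod_cast (by omega : l ≤ w)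
    linarith
  constructor
  · rw [div_le_div_iff₀ hSpos hTpos, hEc]
    nlinarith [mul_le_mul_of_nonneg_right hG1 hSpos.le,
      mul_le_mul_of_nonneg_left (by linarith : (S:ℝ) - l ≤ S)
        (mul_nonneg hK.le hwlR)]
  · rw [div_le_div_iff₀ hTpos hSlR, hEc]
    nlinarith [mul_le_mul_of_nonneg_right hG2 hSlR.le]
end

section
/- Let n ≥ 2 and let i < k ≤ n/10. Then i·((1 + 2/n)^{k-i+2} - 1) < n/2 · ((1 + 1/(2n))^{k-i+1} - 1) for all sufficiently large n. -/
/-- For fixed `i < k`, for all sufficiently large `n` with `k ≤ n/10`,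
`i ((1 + 2/n)^{k-i+2} - 1) < (n/2) ((1 + 1/(2n))^{k-i+1} - 1)`. -/
theorem correction_measure_bound (i k : ℕ) (hik : i < k) :
    ∃ N0 : ℕ, ∀ n : ℕ, N0 ≤ n → (k : ℝ) ≤ (n : ℝ) / 10 →
      (i : ℝ) * ((1 + 2 / (n : ℝ)) ^ (k - i + 2) - 1) <
        (n : ℝ) / 2 * ((1 + 1 / (2 * (n : ℝ))) ^ (k - i + 1) - 1) := by
  have h0 : Filter.Tendsto
      (fun n : ℕ => (i : ℝ) * ((1 + 2 / (n : ℝ)) ^ (k - i + 2) - 1))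
      Filter.atTop (nhds 0) := by
    have hbase : Filter.Tendsto (fun n : ℕ => (1 + 2 / (n : ℝ)))
        Filter.atTop (nhds 1) := by
      have hdiv : Filter.Tendsto (fun n : ℕ => 2 / (n : ℝ))
          Filter.atTop (nhds 0) :=
        Filter.Tendsto.div_atTop tendsto_const_nhds tendsto_natCast_atTop_atTop
      simpa using (tendsto_const_nhds (x := (1:ℝ))).add hdiv
    have h2 := (hbase.pow (k - i + 2)).sub (tendsto_const_nhds (x := (1:ℝ)))
    have h3 := (tendsto_const_nhds (x := (i:ℝ))).mul h2
    simpa using h3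
  have h1 := h0.eventually (gt_mem_nhds (show (0:ℝ) < 1/4 by norm_num))
  obtain ⟨N0, hN0⟩ := Filter.eventually_atTop.1 h1
  refine ⟨max N0 1, fun n hn _ => ?_⟩
  have hn1 : 1 ≤ n := le_trans (le_max_right _ _) hn
  have hnpos : (0:ℝ) < (n:ℝ) := by exact_mod_cast hn1
  have hL : (i : ℝ) * ((1 + 2 / (n : ℝ)) ^ (k - i + 2) - 1) < 1/4 :=
    hN0 n (le_trans (le_max_left _ _) hn)
  have hR : (1:ℝ)/4 ≤ (n : ℝ) / 2 * ((1 + 1 / (2 * (n : ℝ))) ^ (k - i + 1) - 1) := by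
    have hx : (0:ℝ) < 1 / (2 * (n:ℝ)) := by positivity
    have hbern : 1 + ((k - i + 1) : ℕ) * (1 / (2 * (n:ℝ))) ≤
        (1 + 1 / (2 * (n:ℝ))) ^ (k - i + 1) := by
      have := one_add_mul_le_pow (a := 1 / (2 * (n:ℝ))) (by linarith) (k - i + 1)
      simpa using this
    have hone : (1:ℝ) ≤ ((k - i + 1 : ℕ) : ℝ) := by exact_mod_cast Nat.le_add_left 1 (k - i)
    have hge : 1 / (2 * (n:ℝ)) ≤ (1 + 1 / (2 * (n:ℝ))) ^ (k - i + 1) - 1 := by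
      have : (1:ℝ) * (1 / (2 * (n:ℝ))) ≤ ((k - i + 1 : ℕ) : ℝ) * (1 / (2 * (n:ℝ))) :=
        mul_le_mul_of_nonneg_right hone (le_of_lt hx)
      nlinarith
    have hhalf : (0:ℝ) < (n:ℝ) / 2 := by positivity
    have := mul_le_mul_of_nonneg_left hge (le_of_lt hhalf)
    have heq : (n:ℝ) / 2 * (1 / (2 * (n:ℝ))) = 1/4 := by
      field_simp; ring
    linarith [heq ▸ this]
  linarith
end

section
/- Consider the CFL LP instance with facility set F = Cheap ∪ Costly, |Cheap| = |Costly| = n, capacity U = n^3, client set C with |C| = nU + 1, facility costs 0 for cheap facilities and 1 for costly ones, all connection costs 0. The fractional solution with y_i = 1 and x_{ij} = (1 - n^{-2})/n for i ∈ Cheap, and y_i = 10/n^2 and x_{ij} = n^{-2}/n for i ∈ Costly, is feasible for the classic LP relaxation (constraints: x_{ij} ≤ y_i, ∑_i x_{ij} = 1, ∑_j x_{ij} ≤ U y_i, 0 ≤ x, y ≤ 1), and its cost is 10/n. -/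
/-- The "bad" fractional solution for the CFL instance with `n` cheap facilities
(cost 0), `n` costly facilities (cost 1), capacity `U = n^3`, `nU + 1` clients and
all connection costs 0 is feasible for the classic LP relaxation and has cost `10/n`. -/
theorem cfl_bad_solution_feasible (n : ℕ) (hn : 4 ≤ n) :
    let F := Fin n ⊕ Fin n  -- cheap ⊕ costly
    let C := Fin (n * n ^ 3 + 1)
    let y : F → ℝ := Sum.elim (fun _ => 1) (fun _ => 10 / (n : ℝ) ^ 2)
    let x : F → C → ℝ :=
      Sum.elim (fun _ _ => (1 - ((n : ℝ) ^ 2)⁻¹) / n) (fun _ _ => ((n : ℝ) ^ 2)⁻¹ / n)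
    let fcost : F → ℝ := Sum.elim (fun _ => 0) (fun _ => 1)
    (∀ i j, x i j ≤ y i) ∧
    (∀ j, ∑ i, x i j = 1) ∧
    (∀ i, ∑ j, x i j ≤ (n : ℝ) ^ 3 * y i) ∧
    (∀ i, 0 ≤ y i ∧ y i ≤ 1) ∧
    (∀ i j, 0 ≤ x i j ∧ x i j ≤ 1) ∧
    (∑ i, fcost i * y i = 10 / (n : ℝ)) := by
  intro F C y x fcost
  have hn4 : (4 : ℝ) ≤ (n : ℝ) := by exact_mod_cast hn
  have hnpos : (0 : ℝ) < n := by linarith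
  have h1 : (0:ℝ) < (n:ℝ)^2 := by positivity
  have h2 : ((n : ℝ) ^ 2)⁻¹ ≤ 1 := by
    rw [inv_eq_one_div, div_le_one h1]; nlinarith
  have h3 : (0:ℝ) ≤ ((n : ℝ) ^ 2)⁻¹ := by positivity
  have hcard : ((Fintype.card C : ℕ) : ℝ) = (n : ℝ) * (n : ℝ) ^ 3 + 1 := by
    simp [C]
  refine ⟨?_, ?_, ?_, ?_, ?_, ?_⟩
  · rintro (i | i) j <;> simp only [x, y, Sum.elim_inl, Sum.elim_inr]
    · rw [div_le_one hnpos]; nlinarith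
    · rw [div_le_div_iff₀ hnpos h1, inv_mul_cancel₀ (ne_of_gt h1)]; nlinarith
  · intro j
    rw [Fintype.sum_sum_type]
    simp only [x, Sum.elim_inl, Sum.elim_inr, Finset.sum_const, Finset.card_univ,
      Fintype.card_fin, nsmul_eq_mul]
    field_simp
    ring
  · rintro (i | i) <;>
      simp only [x, y, Sum.elim_inl, Sum.elim_inr, Finset.sum_const, Finset.card_univ,
        nsmul_eq_mul] <;> rw [hcard]
    all_goals have hinv : ((n:ℝ)^2)⁻¹ * (n:ℝ)^2 = 1 := inv_mul_cancel₀ (ne_of_gt h1)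
    · rw [← mul_div_assoc, div_le_iff₀ hnpos]
      nlinarith [pow_pos hnpos 4]
    · have e : (n:ℝ)^3 * (10/(n:ℝ)^2) = 10 * n := by field_simp
      rw [e, ← mul_div_assoc, div_le_iff₀ hnpos]
      nlinarith [pow_pos hnpos 4]
  · rintro (i | i) <;> simp only [y, Sum.elim_inl, Sum.elim_inr]
    · exact ⟨zero_le_one, le_refl 1⟩
    · refine ⟨by positivity, ?_⟩
      rw [div_le_one h1]; nlinarith
  · rintro (i | i) j <;> simp only [x, Sum.elim_inl, Sum.elim_inr]
    · refine ⟨div_nonneg (by linarith) hnpos.le, ?_⟩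
      rw [div_le_one hnpos]; linarith
    · refine ⟨by positivity, ?_⟩
      rw [div_le_one hnpos]; linarith
  · rw [Fintype.sum_sum_type]
    simp only [fcost, y, Sum.elim_inl, Sum.elim_inr, zero_mul, one_mul, Finset.sum_const,
      Finset.card_univ, Fintype.card_fin, nsmul_eq_mul, Finset.sum_const_zero, zero_add]
    field_simp
    ring
end

section
/- In the instance with 2n facilities (n cheap of cost 0, n costly of cost 1), uniform capacity U = n^3 and nU + 1 unit-demand clients, every feasible integral solution has cost at least 1. Consequently, the integrality gap between integral optimum and the fractional solution of cost 10/n is at least n/10. -/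
/-- Every feasible integral solution to the CFL instance with `n` cheap (cost 0) and
`n` costly (cost 1) facilities, capacity `U = n^3` and `nU + 1` clients must open at
least one costly facility, so it has cost at least 1; against the fractional solution
of cost `10/n` this yields an integrality gap of at least `n/10`. -/
theorem cfl_integral_lower_bound (n : ℕ) (hn : 1 ≤ n)
    (y : Fin n ⊕ Fin n → ℕ) (x : Fin n ⊕ Fin n → Fin (n * n ^ 3 + 1) → ℕ)
    (hy : ∀ i, y i ≤ 1) (hx : ∀ i j, x i j ≤ y i)
    (hasg : ∀ j, ∑ i, x i j = 1)
    (hcap : ∀ i, ∑ j, x i j ≤ n ^ 3 * y i) :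
    1 ≤ ∑ i : Fin n, y (Sum.inr i) ∧
    (1 : ℝ) / (10 / (n : ℝ)) = (n : ℝ) / 10 := by
  constructor
  · by_contra h
    push_neg at h
    interval_cases hsum : (∑ i : Fin n, y (Sum.inr i))
    have hzero : ∀ i : Fin n, y (Sum.inr i) = 0 := by
      intro i
      have := Finset.sum_eq_zero_iff.mp hsum i (Finset.mem_univ i)
      exact this
    -- total assignment
    have htot : ∑ j, ∑ i, x i j = n * n ^ 3 + 1 := by
      simp [hasg]
    have hswap : ∑ j, ∑ i, x i j = ∑ i, ∑ j, x i j := Finset.sum_comm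
    have hle : ∑ i, ∑ j, x i j ≤ n * n ^ 3 := by
      calc ∑ i, ∑ j, x i j ≤ ∑ i, n ^ 3 * y i := Finset.sum_le_sum fun i _ => hcap i
        _ = (∑ i : Fin n, n ^ 3 * y (Sum.inl i)) + ∑ i : Fin n, n ^ 3 * y (Sum.inr i) :=
          Fintype.sum_sum_type _
        _ ≤ (∑ i : Fin n, n ^ 3 * 1) + ∑ i : Fin n, n ^ 3 * 0 := by
          gcongr with i _ i _
          · exact hy _
          · exact (hzero i).le
        _ = n * n ^ 3 := by simp [mul_comm]
    omega
  · rw [one_div_div]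
end

section
/- Let s be a feasible point of an LP-relaxation polytope P ⊆ [0,1]^d. Suppose for every constraint π of P and every multiplier product z over at most k variables there is a probability distribution E_{π,z} over 0-1 points of P ∩ {0,1}^d whose marginals agree with s on the variables of the lifted constraint, and such that for any two lifted constraints, the probability of every common monomial event x_{i_1}=...=x_{i_l}=1 (l ≤ k+1) agrees between the two distributions. Then s belongs to the level-k Sherali-Adams relaxation SA^k(P). -/
open Finset
open scoped Classical

/-- Moment of a finitely supported distribution: probability (expectation) of the
monomial event `∀ i ∈ I, x_i = 1` for 0-1 valued points `v ω`. -/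
noncomputable def moment {Ω d : Type*} [Fintype Ω] [Fintype d]
    (p : Ω → ℝ) (v : Ω → d → ℝ) (I : Finset d) : ℝ :=
  ∑ ω, p ω * ∏ i ∈ I, v ω i

/-- Value of the linearization of the lifted constraint
`(β - ∑ i, a i * x i) * ∏_{i ∈ U \ W} x_i * ∏_{i ∈ W} (1 - x_i) ≥ 0`
under the lifting `∏_{i ∈ I} x_i ↦ X I` (with `x_i^2 ↦ x_i`). -/
noncomputable def liftVal {d : Type*} [Fintype d] [DecidableEq d]
    (a : d → ℝ) (β : ℝ) (X : Finset d → ℝ) (U W : Finset d) : ℝ :=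
  ∑ T ∈ W.powerset, (-1 : ℝ) ^ T.card *
    (β * X ((U \ W) ∪ T) - ∑ i, a i * X (insert i ((U \ W) ∪ T)))

/-- Membership of `s` in the level-`k` Sherali-Adams relaxation of the polytope
`{x | ∀ r, ∑ i, A r i * x i ≤ b r}`: there is a lifting `X` extending `s` that
satisfies all lifted constraints with multipliers on at most `k` variables. -/
noncomputable def memSA {d R : Type*} [Fintype d] [DecidableEq d]
    (A : R → d → ℝ) (b : R → ℝ) (k : ℕ) (s : d → ℝ) : Prop :=
  ∃ X : Finset d → ℝ, X ∅ = 1 ∧ (∀ i, X {i} = s i) ∧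
    ∀ r, ∀ U W : Finset d, W ⊆ U → U.card ≤ k → 0 ≤ liftVal (A r) (b r) X U W

/-
The candidate lifting assigns to each small monomial `x_I` its probability under any local
distribution whose scope covers `I`; local consistency makes this well defined. A lifted
constraint involves only monomials inside the scope of its own distribution, so there it is
the expectation of `(β - a·x) ∏_{U \ W} x_i ∏_{W} (1 - x_i)` over feasible 0-1 points `x`,
which is nonnegative pointwise.
-/

theorem exists_extend_of_agree {ι α β : Type*} (D : ι → Set α) (f : ι → α → β) (f₀ : α → β)
    (hagree : ∀ i j a, a ∈ D i → a ∈ D j → f i a = f j a) :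
    ∃ g : α → β, (∀ i, ∀ a ∈ D i, g a = f i a) ∧ ∀ a, (∀ i, a ∉ D i) → g a = f₀ a := by
  refine ⟨fun a => if h : ∃ i, a ∈ D i then f h.choose a else f₀ a, ?_, ?_⟩
  · intro i a ha
    have h : ∃ i, a ∈ D i := ⟨i, ha⟩
    simp only [dif_pos h]
    exact hagree _ _ _ h.choose_spec ha
  · intro a ha
    simp only [dif_neg (not_exists.2 ha)]

theorem prod_insert_of_zero_or_one {d M : Type*} [DecidableEq d] [CommMonoidWithZero M]
    {x : d → M}
    (hx : ∀ i, x i = 0 ∨ x i = 1) (i : d) (J : Finset d) :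
    ∏ j ∈ insert i J, x j = x i * ∏ j ∈ J, x j := by
  by_cases hi : i ∈ J
  · rw [insert_eq_self.2 hi]
    rcases hx i with h0 | h1
    · rw [h0, zero_mul, prod_eq_zero hi h0]
    · rw [h1, one_mul]
  · exact prod_insert hi

section liftVal

variable {d : Type*} [Fintype d] [DecidableEq d] (a : d → ℝ) (β : ℝ)

theorem liftVal_congr {X Y : Finset d → ℝ} {U W : Finset d} (hWU : W ⊆ U)
    (hXY : ∀ I ⊆ U ∪ univ.filter (fun i => a i ≠ 0), I.card ≤ U.card + 1 → X I = Y I) :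
    liftVal a β X U W = liftVal a β Y U W := by
  refine sum_congr rfl fun T hT => ?_
  have hsub : (U \ W) ∪ T ⊆ U := union_subset sdiff_subset ((mem_powerset.1 hT).trans hWU)
  have hcard : ((U \ W) ∪ T).card ≤ U.card := card_le_card hsub
  have hmon : X ((U \ W) ∪ T) = Y ((U \ W) ∪ T) :=
    hXY _ (hsub.trans subset_union_left) (by omega)
  have hlin : ∀ i, a i * X (insert i ((U \ W) ∪ T)) = a i * Y (insert i ((U \ W) ∪ T)) := by
    intro i
    by_cases hai : a i = 0
    · simp [hai]
    · refine congrArg _ (hXY _ (insert_subset ?_ (hsub.trans subset_union_left)) ?_)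
      · exact mem_union_right _ (mem_filter.2 ⟨mem_univ i, hai⟩)
      · exact (card_insert_le _ _).trans (by omega)
  simp only [hmon, hlin]

theorem liftVal_mixture {Ω : Type*} [Fintype Ω] (p : Ω → ℝ)
    (Y : Ω → Finset d → ℝ) (U W : Finset d) :
    liftVal a β (fun I => ∑ ω, p ω * Y ω I) U W = ∑ ω, p ω * liftVal a β (Y ω) U W := by
  simp only [liftVal, mul_sum]
  rw [sum_comm]
  refine sum_congr rfl fun T _ => ?_
  simp only [mul_sub, mul_sum, sum_sub_distrib]
  rw [sum_comm (s := univ) (t := univ)]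
  congr 1 <;> refine sum_congr rfl fun _ _ => ?_
  · ring
  · exact sum_congr rfl fun _ _ => by ring

theorem liftVal_prod_of_zero_or_one {x : d → ℝ} (hx : ∀ i, x i = 0 ∨ x i = 1)
    (U W : Finset d) :
    liftVal a β (fun I => ∏ i ∈ I, x i) U W
      = (β - ∑ i, a i * x i) * ((∏ j ∈ U \ W, x j) * ∏ j ∈ W, (1 - x j)) := by
  have hsplit : ∀ T ∈ W.powerset,
      ∏ j ∈ (U \ W) ∪ T, x j = (∏ j ∈ U \ W, x j) * ∏ j ∈ T, x j := fun T hT =>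
    prod_union (disjoint_of_subset_right (mem_powerset.1 hT) sdiff_disjoint)
  have hexpand : ∏ j ∈ W, (1 - x j) = ∑ T ∈ W.powerset, (-1) ^ T.card * ∏ j ∈ T, x j := by
    simp [prod_sub]
  rw [hexpand, mul_sum, mul_sum]
  refine sum_congr rfl fun T hT => ?_
  simp only [prod_insert_of_zero_or_one hx, hsplit T hT, sub_mul, sum_mul, mul_sub, mul_sum]
  congr 1
  · ring
  · exact sum_congr rfl fun _ _ => by ring

theorem liftVal_moment_nonneg {Ω : Type*} [Fintype Ω] {p : Ω → ℝ} {v : Ω → d → ℝ}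
    (hp : ∀ ω, 0 ≤ p ω) (hv : ∀ ω i, v ω i = 0 ∨ v ω i = 1)
    (hfeas : ∀ ω, ∑ i, a i * v ω i ≤ β) (U W : Finset d) :
    0 ≤ liftVal a β (moment p v) U W := by
  have hx01 : ∀ ω i, 0 ≤ v ω i ∧ v ω i ≤ 1 := fun ω i => by
    rcases hv ω i with h | h <;> simp [h]
  change 0 ≤ liftVal a β (fun I => ∑ ω, p ω * ∏ i ∈ I, v ω i) U W
  rw [liftVal_mixture]
  refine sum_nonneg fun ω _ => mul_nonneg (hp ω) ?_
  rw [liftVal_prod_of_zero_or_one a β (hv ω)]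
  refine mul_nonneg (sub_nonneg.2 (hfeas ω)) (mul_nonneg ?_ ?_)
  · exact prod_nonneg fun j _ => (hx01 ω j).1
  · exact prod_nonneg fun j _ => sub_nonneg.2 (hx01 ω j).2

end liftVal

theorem sa_survival_general {d R : Type*} [Fintype d] [DecidableEq d]
    (A : R → d → ℝ) (b : R → ℝ) (k : ℕ) (s : d → ℝ)
    (Ω : R → Finset d → Finset d → Type)
    [∀ r U W, Fintype (Ω r U W)]
    (p : ∀ r U W, Ω r U W → ℝ) (v : ∀ r U W, Ω r U W → d → ℝ)
    (hp0 : ∀ r U W ω, 0 ≤ p r U W ω) (hp1 : ∀ r U W, ∑ ω, p r U W ω = 1)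
    (hint : ∀ r U W ω i, v r U W ω i = 0 ∨ v r U W ω i = 1)
    (hfeas : ∀ r U W ω r', ∑ i, A r' i * v r U W ω i ≤ b r')
    (hmarg : ∀ r (U W : Finset d), W ⊆ U → U.card ≤ k →
      ∀ i ∈ U ∪ Finset.univ.filter (fun i => A r i ≠ 0),
        moment (p r U W) (v r U W) {i} = s i)
    (hcons : ∀ r₁ (U₁ W₁ : Finset d), ∀ r₂ (U₂ W₂ : Finset d),
      W₁ ⊆ U₁ → U₁.card ≤ k → W₂ ⊆ U₂ → U₂.card ≤ k →
      ∀ I : Finset d, I.card ≤ k + 1 →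
        I ⊆ U₁ ∪ Finset.univ.filter (fun i => A r₁ i ≠ 0) →
        I ⊆ U₂ ∪ Finset.univ.filter (fun i => A r₂ i ≠ 0) →
        moment (p r₁ U₁ W₁) (v r₁ U₁ W₁) I = moment (p r₂ U₂ W₂) (v r₂ U₂ W₂) I) :
    memSA A b k s := by
  let scope : R × Finset d × Finset d → Set (Finset d) := fun ⟨r, U, W⟩ =>
    {I | W ⊆ U ∧ U.card ≤ k ∧ I.card ≤ k + 1 ∧ I ⊆ U ∪ univ.filter (fun i => A r i ≠ 0)}
  obtain ⟨X, hX, hX₀⟩ := exists_extend_of_agree scope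
    -- the fallback only matters for `∅` and singletons, when no scope covers them
    (fun ⟨r, U, W⟩ => moment (p r U W) (v r U W)) (fun I => ∏ i ∈ I, s i)
    (fun ⟨r₁, U₁, W₁⟩ ⟨r₂, U₂, W₂⟩ I ⟨hWU₁, hUk₁, hIk, hI₁⟩ ⟨hWU₂, hUk₂, _, hI₂⟩ =>
      hcons r₁ U₁ W₁ r₂ U₂ W₂ hWU₁ hUk₁ hWU₂ hUk₂ I hIk hI₁ hI₂)
  refine ⟨X, ?_, fun i => ?_, fun r U W hWU hUk => ?_⟩
  · by_cases h : ∃ c, ∅ ∈ scope c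
    · obtain ⟨⟨r, U, W⟩, hc⟩ := h
      rw [hX (r, U, W) _ hc]
      simp [moment, hp1]
    · simp [hX₀ ∅ (not_exists.1 h)]
  · by_cases h : ∃ c, {i} ∈ scope c
    · obtain ⟨⟨r, U, W⟩, hWU, hUk, -, hi⟩ := h
      rw [hX (r, U, W) _ ⟨hWU, hUk, by simp, hi⟩]
      exact hmarg r U W hWU hUk i (hi (mem_singleton_self i))
    · simp [hX₀ {i} (not_exists.1 h)]
  · rw [liftVal_congr (A r) (b r) (Y := moment (p r U W) (v r U W)) hWU
      fun I hI hIcard => hX (r, U, W) I ⟨hWU, hUk, by omega, hI⟩]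
    exact liftVal_moment_nonneg (A r) (b r) (hp0 r U W) (hint r U W)
      (fun ω => hfeas r U W ω r) U W

/-- Local-to-global method (Lemma `SA-survival`): if for every constraint `r` and
multiplier `(U, W)` with `|U| ≤ k` there is a distribution over 0-1 feasible points
whose marginals agree with `s` on the variables of the lifted constraint, and any two
such distributions agree on the probability of every common monomial event on at most
`k + 1` variables, then `s` lies in the level-`k` Sherali-Adams relaxation. -/
theorem sa_survival {d R : Type*} [Fintype d] [DecidableEq d] [Fintype R]
    (A : R → d → ℝ) (b : R → ℝ) (k : ℕ) (s : d → ℝ)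
    (hs : ∀ r, ∑ i, A r i * s i ≤ b r) (hs01 : ∀ i, 0 ≤ s i ∧ s i ≤ 1)
    (Ω : R → Finset d → Finset d → Type)
    [∀ r U W, Fintype (Ω r U W)]
    (p : ∀ r U W, Ω r U W → ℝ) (v : ∀ r U W, Ω r U W → d → ℝ)
    (hp0 : ∀ r U W ω, 0 ≤ p r U W ω) (hp1 : ∀ r U W, ∑ ω, p r U W ω = 1)
    (hint : ∀ r U W ω i, v r U W ω i = 0 ∨ v r U W ω i = 1)
    (hfeas : ∀ r U W ω r', ∑ i, A r' i * v r U W ω i ≤ b r')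
    (hmarg : ∀ r (U W : Finset d), W ⊆ U → U.card ≤ k →
      ∀ i ∈ U ∪ Finset.univ.filter (fun i => A r i ≠ 0),
        moment (p r U W) (v r U W) {i} = s i)
    (hcons : ∀ r₁ (U₁ W₁ : Finset d), ∀ r₂ (U₂ W₂ : Finset d),
      W₁ ⊆ U₁ → U₁.card ≤ k → W₂ ⊆ U₂ → U₂.card ≤ k →
      ∀ I : Finset d, I.card ≤ k + 1 →
        I ⊆ U₁ ∪ Finset.univ.filter (fun i => A r₁ i ≠ 0) →
        I ⊆ U₂ ∪ Finset.univ.filter (fun i => A r₂ i ≠ 0) →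
        moment (p r₁ U₁ W₁) (v r₁ U₁ W₁) I = moment (p r₂ U₂ W₂) (v r₂ U₂ W₂) I) :
    memSA A b k s :=
  sa_survival_general A b k s Ω p v hp0 hp1 hint hfeas hmarg hcons
end

section
/- In the round-A construction, with n+1 facilities, classes containing exactly n - c facilities (2 ≤ c, constant), each class containing exactly one of facilities n, n+1, total measure φ distributed uniformly over all admissible type-A classes: each facility i ≤ n-1 appears in a class a fraction (n-c-1)/(n-1) of the measure; each exclusive client of i is assigned to i with fraction φ(n-c-1)/(n-1) and to each other facility i' ≤ n-1, i' ≠ i with fraction φ(n-c-1)/((n-1)(n-2)(n^2-1)); each exclusive client of facilities n, n+1 is assigned to each of n, n+1 with fraction φ·n^2/(2(n^2+n-1)). -/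
open Finset

private lemma L1 {β γ : Type*} [Fintype β] [Fintype γ]
    (pb : β → Prop) (pc : β → γ → Prop)
    [DecidablePred pb] [∀ b, DecidablePred (pc b)]
    (F : ℕ) (hF : ∀ b, pb b → ((univ : Finset γ).filter (pc b)).card = F) :
    ((univ : Finset (β × γ)).filter fun x => pb x.1 ∧ pc x.1 x.2).card
      = (univ.filter pb).card * F := by
  classical
  rw [Finset.card_filter, Fintype.sum_prod_type]
  have h1 : ∀ b : β, (∑ cc : γ, if pb b ∧ pc b cc then 1 else 0)
      = if pb b then F else 0 := by
    intro b
    by_cases hb : pb b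
    · simp only [hb, true_and, if_true]
      rw [← Finset.card_filter, hF b hb]
    · simp [hb]
  rw [Finset.sum_congr rfl fun b _ => h1 b, Finset.sum_ite, Finset.sum_const,
    Finset.sum_const_zero, add_zero, smul_eq_mul]

private lemma cardSub0 {α : Type*} [Fintype α] [DecidableEq α] (k : ℕ) :
    ((univ : Finset (Finset α)).filter fun s => s.card = k).card
      = (Fintype.card α).choose k := by
  rw [← Finset.card_univ, ← Finset.card_powersetCard]
  congr 1
  ext s
  simp [Finset.mem_powersetCard, Finset.subset_univ]

private lemma cardSub1 {α : Type*} [Fintype α] [DecidableEq α] (a : α) (k : ℕ) :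
    ((univ : Finset (Finset α)).filter fun s => s.card = k + 1 ∧ a ∈ s).card
      = (Fintype.card α - 1).choose k := by
  classical
  have h : ((univ : Finset (Finset α)).filter fun s => s.card = k + 1 ∧ a ∈ s).card
      = (Finset.powersetCard k ({a}ᶜ : Finset α)).card := by
    refine Finset.card_bij' (fun s _ => s.erase a) (fun t _ => insert a t) ?hi ?hj ?hl ?hr
    case hi =>
      intro s hs
      simp only [Finset.mem_filter, Finset.mem_univ, true_and] at hs
      rw [Finset.mem_powersetCard]
      refine ⟨fun x hx => ?_, ?_⟩
      · simp only [Finset.mem_compl, Finset.mem_singleton]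
        exact (Finset.mem_erase.mp hx).1
      · rw [Finset.card_erase_of_mem hs.2, hs.1, Nat.add_sub_cancel]
    case hj =>
      intro t ht
      rw [Finset.mem_powersetCard] at ht
      have ha : a ∉ t := fun h => by simpa using ht.1 h
      simp only [Finset.mem_filter, Finset.mem_univ, true_and]
      exact ⟨by rw [Finset.card_insert_of_notMem ha, ht.2], Finset.mem_insert_self _ _⟩
    case hl =>
      intro s hs
      simp only [Finset.mem_filter, Finset.mem_univ, true_and] at hs
      exact Finset.insert_erase hs.2
    case hr =>
      intro t ht
      rw [Finset.mem_powersetCard] at ht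
      have ha : a ∉ t := fun h => by simpa using ht.1 h
      exact Finset.erase_insert ha
  rw [h, Finset.card_powersetCard, Finset.card_compl, Finset.card_singleton]

private lemma cardSub2 {α : Type*} [Fintype α] [DecidableEq α] (a b : α) (hba : b ≠ a) (k : ℕ) :
    ((univ : Finset (Finset α)).filter fun s => s.card = k + 1 ∧ a ∈ s ∧ b ∉ s).card
      = (Fintype.card α - 2).choose k := by
  classical
  have h : ((univ : Finset (Finset α)).filter fun s => s.card = k + 1 ∧ a ∈ s ∧ b ∉ s).card
      = (Finset.powersetCard k (({a, b} : Finset α)ᶜ)).card := by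
    refine Finset.card_bij' (fun s _ => s.erase a) (fun t _ => insert a t) ?hi ?hj ?hl ?hr
    case hi =>
      intro s hs
      simp only [Finset.mem_filter, Finset.mem_univ, true_and] at hs
      rw [Finset.mem_powersetCard]
      refine ⟨fun x hx => ?_, ?_⟩
      · simp only [Finset.mem_compl, Finset.mem_insert, Finset.mem_singleton]
        push_neg
        refine ⟨(Finset.mem_erase.mp hx).1, fun hxb => ?_⟩
        exact hs.2.2 (hxb ▸ (Finset.mem_erase.mp hx).2)
      · rw [Finset.card_erase_of_mem hs.2.1, hs.1, Nat.add_sub_cancel]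
    case hj =>
      intro t ht
      rw [Finset.mem_powersetCard] at ht
      have ha : a ∉ t := fun h => by simpa using ht.1 h
      have hb : b ∉ t := fun h => by simpa using ht.1 h
      simp only [Finset.mem_filter, Finset.mem_univ, true_and]
      refine ⟨by rw [Finset.card_insert_of_notMem ha, ht.2], Finset.mem_insert_self _ _, ?_⟩
      simp only [Finset.mem_insert]
      push_neg
      exact ⟨hba, hb⟩
    case hl =>
      intro s hs
      simp only [Finset.mem_filter, Finset.mem_univ, true_and] at hs
      exact Finset.insert_erase hs.2.1
    case hr =>
      intro t ht
      rw [Finset.mem_powersetCard] at ht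
      have ha : a ∉ t := fun h => by simpa using ht.1 h
      exact Finset.erase_insert ha
  rw [h, Finset.card_powersetCard, Finset.card_compl]
  congr 2
  rw [Finset.card_insert_of_notMem (by simpa using hba.symm), Finset.card_singleton]

private lemma fcount {m d : ℕ} (S : Finset (Fin m)) :
    ((univ : Finset (Fin m → Fin m × Fin d)).filter fun f => ∀ j ∈ S, (f j).1 ∉ S).card
      = ((m - S.card) * d) ^ S.card * (m * d) ^ (m - S.card) := by
  classical
  have he : (univ : Finset (Fin m → Fin m × Fin d)).filter (fun f => ∀ j ∈ S, (f j).1 ∉ S)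
      = Fintype.piFinset (fun j => if j ∈ S then ((Sᶜ : Finset (Fin m)) ×ˢ univ) else univ) := by
    ext f
    simp only [Finset.mem_filter, Finset.mem_univ, true_and, Fintype.mem_piFinset]
    constructor
    · intro h j
      by_cases hj : j ∈ S
      · simp only [hj, if_true, Finset.mem_product, Finset.mem_compl]
        exact ⟨h j hj, Finset.mem_univ _⟩
      · simp [hj]
    · intro h j hj
      have := h j
      simp only [hj, if_true, Finset.mem_product, Finset.mem_compl] at this
      exact this.1
  rw [he, Fintype.card_piFinset]
  have hc : ∀ j : Fin m, ((if j ∈ S then ((Sᶜ : Finset (Fin m)) ×ˢ univ)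
        else (univ : Finset (Fin m × Fin d)))).card
      = if j ∈ S then (m - S.card) * d else m * d := by
    intro j
    by_cases hj : j ∈ S <;>
      simp [hj, Finset.card_compl, Finset.card_univ, Fintype.card_prod]
  rw [Finset.prod_congr rfl fun j _ => hc j, Finset.prod_ite, Finset.prod_const,
    Finset.prod_const]
  congr 2
  · simp
  · have := Finset.card_filter_add_card_filter_not (s := (univ : Finset (Fin m)))
      (fun j => j ∈ S)
    have h2 : (univ.filter fun j => j ∈ S).card = S.card := by simp
    simp only [Finset.card_univ, Fintype.card_fin] at this
    omega

private lemma fcount_pin {m d : ℕ} (S : Finset (Fin m)) (i' i : Fin m) (b : Fin d)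
    (hi' : i' ∈ S) (hi : i ∉ S) :
    ((univ : Finset (Fin m → Fin m × Fin d)).filter
        fun f => (∀ j ∈ S, (f j).1 ∉ S) ∧ f i' = (i, b)).card
      = ((m - S.card) * d) ^ (S.card - 1) * (m * d) ^ (m - S.card) := by
  classical
  have he : (univ : Finset (Fin m → Fin m × Fin d)).filter
        (fun f => (∀ j ∈ S, (f j).1 ∉ S) ∧ f i' = (i, b))
      = Fintype.piFinset (fun j => if j = i' then {(i, b)} else
          if j ∈ S then ((Sᶜ : Finset (Fin m)) ×ˢ univ) else univ) := by
    ext f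
    simp only [Finset.mem_filter, Finset.mem_univ, true_and, Fintype.mem_piFinset]
    constructor
    · intro h j
      by_cases hji : j = i'
      · subst hji; simp [h.2]
      · by_cases hj : j ∈ S
        · simp only [hji, if_false, hj, if_true, Finset.mem_product, Finset.mem_compl]
          exact ⟨h.1 j hj, Finset.mem_univ _⟩
        · simp [hji, hj]
    · intro h
      have hfi : f i' = (i, b) := by have := h i'; simpa using this
      refine ⟨fun j hj => ?_, hfi⟩
      by_cases hji : j = i'
      · subst hji; rw [hfi]; exact hi
      · have := h j
        simp only [hji, if_false, hj, if_true, Finset.mem_product, Finset.mem_compl] at this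
        exact this.1
  rw [he, Fintype.card_piFinset]
  rw [← Finset.mul_prod_erase univ _ (Finset.mem_univ i')]
  have hc : ∀ j ∈ univ.erase i',
      ((if j = i' then ({(i, b)} : Finset (Fin m × Fin d)) else
          if j ∈ S then ((Sᶜ : Finset (Fin m)) ×ˢ univ) else univ)).card
        = if j ∈ S then (m - S.card) * d else m * d := by
    intro j hj
    have hji : j ≠ i' := (Finset.mem_erase.mp hj).1
    by_cases hjS : j ∈ S <;>
      simp [hji, hjS, Finset.card_compl, Finset.card_univ, Fintype.card_prod]
  rw [Finset.prod_congr rfl hc, Finset.prod_ite, Finset.prod_const, Finset.prod_const]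
  have h1 : ((univ.erase i').filter fun j => j ∈ S).card = S.card - 1 := by
    have : (univ.erase i').filter (fun j => j ∈ S) = S.erase i' := by
      ext j
      simp only [Finset.mem_filter, Finset.mem_erase, Finset.mem_univ, and_true, true_and]
      try tauto
    rw [this, Finset.card_erase_of_mem hi']
  have h2 : ((univ.erase i').filter fun j => ¬ j ∈ S).card = m - S.card := by
    have hh := Finset.card_filter_add_card_filter_not (s := univ.erase i')
      (fun j => j ∈ S)
    have hcardS : 1 ≤ S.card := Finset.card_pos.mpr ⟨i', hi'⟩
    have hSle : S.card ≤ m := by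
      have := Finset.card_le_card (Finset.subset_univ S)
      simpa [Finset.card_univ] using this
    rw [h1] at hh
    rw [Finset.card_erase_of_mem (Finset.mem_univ i'), Finset.card_univ,
      Fintype.card_fin] at hh
    omega
  rw [h1, h2]
  simp

private lemma count4 {β γ δ : Type*} [Fintype β] [Fintype γ] [Fintype δ]
    (pe : Bool → Prop) (pb : β → Prop) (pc : β → γ → Prop) (pd : δ → Prop)
    [DecidablePred pe] [DecidablePred pb] [∀ b, DecidablePred (pc b)] [DecidablePred pd]
    (F : ℕ) (hF : ∀ b, pb b → ((univ : Finset γ).filter (pc b)).card = F) :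
    ((univ : Finset (Bool × β × γ × δ)).filter
        fun x => pe x.1 ∧ pb x.2.1 ∧ pc x.2.1 x.2.2.1 ∧ pd x.2.2.2).card
      = (univ.filter pe).card *
          ((univ.filter pb).card * (F * (univ.filter pd).card)) := by
  classical
  have h3 : ∀ s, pb s → ((univ : Finset (γ × δ)).filter
      (fun z : γ × δ => pc s z.1 ∧ pd z.2)).card = F * (univ.filter pd).card := by
    intro s hs
    rw [L1 (pc s) (fun _ dd => pd dd) (univ.filter pd).card (fun _ _ => rfl), hF s hs]
  have h2 : ∀ e : Bool, pe e → ((univ : Finset (β × γ × δ)).filter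
      (fun y : β × γ × δ => pb y.1 ∧ pc y.1 y.2.1 ∧ pd y.2.2)).card
        = (univ.filter pb).card * (F * (univ.filter pd).card) := by
    intro e _
    exact L1 pb (fun (s : β) (z : γ × δ) => pc s z.1 ∧ pd z.2) _ h3
  exact L1 pe (fun (_ : Bool) (y : β × γ × δ) => pb y.1 ∧ pc y.1 y.2.1 ∧ pd y.2.2) _ h2

/-- Round A (Lemma `roundA`): with measure `φ` spread uniformly over all admissible
type-A classes (a choice of one of the two far facilities, a set `S` of `n - c - 1` of
the first `n - 1` facilities each taking all its `B - 1` exclusive clients plus one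
exclusive client of a facility outside `S`, and a set of `B` of the `B + n - 1` shared
clients for the chosen far facility): each exclusive client of a facility `i ≤ n-1` is
assigned to `i` with fraction `φ (n-c-1)/(n-1)`, to each other facility `i' ≤ n-1`
with fraction `φ (n-c-1)/((n-1)(n-2)(n²-1))`, and each shared client is assigned to
each far facility with fraction `φ n²/(2(n²+n-1))`. -/
theorem roundA_fractions (n c : ℕ) (hc : 2 ≤ c) (hcn : c + 2 ≤ n) (φ : ℝ) (hφ : 0 < φ) :
    let B := n ^ 2
    let ClassA := Bool × Finset (Fin (n - 1)) ×
      (Fin (n - 1) → Fin (n - 1) × Fin (B - 1)) × Finset (Fin (B + n - 1))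
    let 𝒜 : Finset ClassA := Finset.univ.filter (fun cl =>
      cl.2.1.card = n - c - 1 ∧ (∀ i ∈ cl.2.1, (cl.2.2.1 i).1 ∉ cl.2.1) ∧
      cl.2.2.2.card = B)
    (∀ i : Fin (n - 1), ∀ _b : Fin (B - 1),
      φ * ((𝒜.filter (fun cl => i ∈ cl.2.1)).card : ℝ) / 𝒜.card =
        φ * ((n : ℝ) - c - 1) / ((n : ℝ) - 1)) ∧
    (∀ i i' : Fin (n - 1), ∀ b : Fin (B - 1), i ≠ i' →
      φ * ((𝒜.filter (fun cl => i' ∈ cl.2.1 ∧ cl.2.2.1 i' = (i, b))).card : ℝ) / 𝒜.card =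
        φ * ((n : ℝ) - c - 1) /
          (((n : ℝ) - 1) * ((n : ℝ) - 2) * ((n : ℝ) ^ 2 - 1))) ∧
    (∀ e : Bool, ∀ r : Fin (B + n - 1),
      φ * ((𝒜.filter (fun cl => cl.1 = e ∧ r ∈ cl.2.2.2)).card : ℝ) / 𝒜.card =
        φ * (n : ℝ) ^ 2 / (2 * ((n : ℝ) ^ 2 + n - 1))) := by
  intro B ClassA 𝒜
  simp only [𝒜, ClassA, B]
  have hn4 : 4 ≤ n := by omega
  have hB16 : 16 ≤ n ^ 2 := by nlinarith
  have hnR' : (4 : ℝ) ≤ (n : ℝ) := by exact_mod_cast hn4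
  have hposA : (0 : ℝ) < (n : ℝ) - 1 := by linarith
  have hposB : (0 : ℝ) < (n : ℝ) - 2 := by linarith
  have hposC : (0 : ℝ) < (n : ℝ) ^ 2 - 1 := by nlinarith
  have hposD : (0 : ℝ) < (n : ℝ) ^ 2 + (n : ℝ) - 1 := by nlinarith
  -- opaque constants
  obtain ⟨F, hFdef⟩ : ∃ x, (c * (n ^ 2 - 1)) ^ (n - c - 1) * ((n - 1) * (n ^ 2 - 1)) ^ c = x :=
    ⟨_, rfl⟩
  obtain ⟨F2, hF2def⟩ : ∃ x, (c * (n ^ 2 - 1)) ^ (n - c - 2) * ((n - 1) * (n ^ 2 - 1)) ^ c = x :=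
    ⟨_, rfl⟩
  obtain ⟨C0, hC0def⟩ : ∃ x, (n - 1).choose (n - c - 1) = x := ⟨_, rfl⟩
  obtain ⟨C1, hC1def⟩ : ∃ x, (n - 2).choose (n - c - 2) = x := ⟨_, rfl⟩
  obtain ⟨C2, hC2def⟩ : ∃ x, (n - 3).choose (n - c - 2) = x := ⟨_, rfl⟩
  obtain ⟨ct, hctdef⟩ : ∃ x, (n ^ 2 + n - 1).choose (n ^ 2) = x := ⟨_, rfl⟩
  obtain ⟨ct', hct'def⟩ : ∃ x, (n ^ 2 + n - 2).choose (n ^ 2 - 1) = x := ⟨_, rfl⟩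
  -- positivity
  have hFpos : 0 < F := by
    rw [← hFdef]
    exact Nat.mul_pos (pow_pos (Nat.mul_pos (by omega) (by revert hB16; generalize n ^ 2 = N; intro h16; omega)) _)
      (pow_pos (Nat.mul_pos (by omega) (by revert hB16; generalize n ^ 2 = N; intro h16; omega)) _)
  have hF2pos : 0 < F2 := by
    rw [← hF2def]
    exact Nat.mul_pos (pow_pos (Nat.mul_pos (by omega) (by revert hB16; generalize n ^ 2 = N; intro h16; omega)) _)
      (pow_pos (Nat.mul_pos (by omega) (by revert hB16; generalize n ^ 2 = N; intro h16; omega)) _)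
  have hC0pos : 0 < C0 := by rw [← hC0def]; exact Nat.choose_pos (by omega)
  have hctpos : 0 < ct := by rw [← hctdef]; exact Nat.choose_pos (by revert hB16; generalize n ^ 2 = N; intro h16; omega)
  -- f-counts
  have hFS : ∀ S : Finset (Fin (n - 1)), #S = n - c - 1 →
      #((Finset.univ : Finset (Fin (n - 1) → Fin (n - 1) × Fin (n ^ 2 - 1))).filter
        (fun f => ∀ j ∈ S, (f j).1 ∉ S)) = F := by
    intro S hS
    rw [fcount S, hS, show n - 1 - (n - c - 1) = c from by omega, hFdef]
  -- component counts
  have hbool2 : #((Finset.univ : Finset Bool).filter (fun _ => True)) = 2 := by simp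
  have hS0 : #((Finset.univ : Finset (Finset (Fin (n - 1)))).filter
      (fun s => #s = n - c - 1)) = C0 := by
    rw [cardSub0, Fintype.card_fin, hC0def]
  have hT0 : #((Finset.univ : Finset (Finset (Fin (n ^ 2 + n - 1)))).filter
      (fun t => #t = n ^ 2)) = ct := by
    rw [cardSub0, Fintype.card_fin, hctdef]
  -- total count
  have htot : #(Finset.univ.filter (fun cl : Bool × Finset (Fin (n - 1)) × (Fin (n - 1) → Fin (n - 1) × Fin (n ^ 2 - 1)) × Finset (Fin (n ^ 2 + n - 1)) => #cl.2.1 = n - c - 1 ∧ (∀ i ∈ cl.2.1, (cl.2.2.1 i).1 ∉ cl.2.1) ∧ #cl.2.2.2 = n ^ 2)) = 2 * (C0 * (F * ct)) := by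
    have e : Finset.univ.filter (fun cl : Bool × Finset (Fin (n - 1)) × (Fin (n - 1) → Fin (n - 1) × Fin (n ^ 2 - 1)) × Finset (Fin (n ^ 2 + n - 1)) => #cl.2.1 = n - c - 1 ∧ (∀ i ∈ cl.2.1, (cl.2.2.1 i).1 ∉ cl.2.1) ∧ #cl.2.2.2 = n ^ 2)
        = Finset.univ.filter (fun cl : Bool × Finset (Fin (n - 1)) × (Fin (n - 1) → Fin (n - 1) × Fin (n ^ 2 - 1)) × Finset (Fin (n ^ 2 + n - 1)) =>
            True ∧ #cl.2.1 = n - c - 1 ∧ (∀ j ∈ cl.2.1, (cl.2.2.1 j).1 ∉ cl.2.1) ∧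
              #cl.2.2.2 = n ^ 2) :=
      Finset.filter_congr (fun x _ => by tauto)
    rw [e, count4 (fun _ : Bool => True) (fun s : Finset (Fin (n - 1)) => #s = n - c - 1)
      (fun (s : Finset (Fin (n - 1))) (f : Fin (n - 1) → Fin (n - 1) × Fin (n ^ 2 - 1)) =>
        ∀ j ∈ s, (f j).1 ∉ s)
      (fun t : Finset (Fin (n ^ 2 + n - 1)) => #t = n ^ 2) F hFS, hbool2, hS0, hT0]
  -- denominators and casts
  have hnR : (4 : ℝ) ≤ (n : ℝ) := by exact_mod_cast hn4
  have hcR : (2 : ℝ) ≤ (c : ℝ) := by exact_mod_cast hc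
  have hden : ((2 * (C0 * (F * ct)) : ℕ) : ℝ) ≠ 0 := by
    have : 0 < 2 * (C0 * (F * ct)) := by positivity
    exact_mod_cast this.ne'
  have cast1 : ((n - 1 : ℕ) : ℝ) = (n : ℝ) - 1 := by
    rw [Nat.cast_sub (by omega)]; norm_num
  have cast2 : ((n - 2 : ℕ) : ℝ) = (n : ℝ) - 2 := by
    rw [Nat.cast_sub (by omega)]; norm_num
  have cast3 : ((n - c - 1 : ℕ) : ℝ) = (n : ℝ) - c - 1 := by
    rw [show n - c - 1 = n - (c + 1) from by omega, Nat.cast_sub (by omega)]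
    push_cast; ring
  have cast6 : ((n ^ 2 : ℕ) : ℝ) = (n : ℝ) ^ 2 := by push_cast; ring
  have cast4 : ((n ^ 2 - 1 : ℕ) : ℝ) = (n : ℝ) ^ 2 - 1 := by
    rw [Nat.cast_sub (by revert hB16; generalize n ^ 2 = N; intro h16; omega), cast6]; norm_num
  have cast5 : ((n ^ 2 + n - 1 : ℕ) : ℝ) = (n : ℝ) ^ 2 + n - 1 := by
    rw [Nat.cast_sub (by revert hB16; generalize n ^ 2 = N; intro h16; omega), Nat.cast_add, cast6]; norm_num
  -- choose identities
  have key : (n - 1) * C1 = C0 * (n - c - 1) := by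
    have h := Nat.add_one_mul_choose_eq (n - 2) (n - c - 2)
    rw [show n - 2 + 1 = n - 1 from by omega, show n - c - 2 + 1 = n - c - 1 from by omega,
      hC1def, hC0def] at h
    exact h
  have keyR : ((n : ℝ) - 1) * (C1 : ℝ) = (C0 : ℝ) * ((n : ℝ) - c - 1) := by
    have h' : ((n - 1 : ℕ) : ℝ) * (C1 : ℝ) = (C0 : ℝ) * ((n - c - 1 : ℕ) : ℝ) := by
      exact_mod_cast key
    rwa [cast1, cast3] at h'
  have key2 : C2 * ((n - 2) * (n - 1)) = C0 * ((n - c - 1) * c) := by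
    have h := Nat.choose_mul_succ_eq (n - 3) (n - c - 2)
    rw [show n - 3 + 1 = n - 2 from by omega, show n - 2 - (n - c - 2) = c from by omega,
      hC2def, hC1def] at h
    calc C2 * ((n - 2) * (n - 1)) = C2 * (n - 2) * (n - 1) := by ring
      _ = C1 * c * (n - 1) := by rw [h]
      _ = (n - 1) * C1 * c := by ring
      _ = C0 * (n - c - 1) * c := by rw [key]
      _ = C0 * ((n - c - 1) * c) := by ring
  have key2R : (C2 : ℝ) * (((n : ℝ) - 2) * ((n : ℝ) - 1))
      = (C0 : ℝ) * (((n : ℝ) - c - 1) * (c : ℝ)) := by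
    have h' : (C2 : ℝ) * (((n - 2 : ℕ) : ℝ) * ((n - 1 : ℕ) : ℝ))
        = (C0 : ℝ) * (((n - c - 1 : ℕ) : ℝ) * (c : ℝ)) := by exact_mod_cast key2
    rwa [cast1, cast2, cast3] at h'
  have key3 : (n ^ 2 + n - 1) * ct' = ct * n ^ 2 := by
    have h := Nat.add_one_mul_choose_eq (n ^ 2 + n - 2) (n ^ 2 - 1)
    rw [show n ^ 2 + n - 2 + 1 = n ^ 2 + n - 1 from (by revert hB16; generalize n ^ 2 = N; intro h16; omega),
      show n ^ 2 - 1 + 1 = n ^ 2 from (by revert hB16; generalize n ^ 2 = N; intro h16; omega), hct'def, hctdef] at h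
    exact h
  have key3R : ((n : ℝ) ^ 2 + (n : ℝ) - 1) * (ct' : ℝ) = (ct : ℝ) * (n : ℝ) ^ 2 := by
    have h' : ((n ^ 2 + n - 1 : ℕ) : ℝ) * (ct' : ℝ) = (ct : ℝ) * ((n ^ 2 : ℕ) : ℝ) := by
      exact_mod_cast key3
    rwa [cast5, cast6] at h'
  have hFF2 : F = (c * (n ^ 2 - 1)) * F2 := by
    rw [← hFdef, ← hF2def, show n - c - 1 = (n - c - 2) + 1 from by omega, pow_succ]
    ring
  have hFF2R : (F : ℝ) = (c : ℝ) * ((n : ℝ) ^ 2 - 1) * (F2 : ℝ) := by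
    have h' : (F : ℝ) = (c : ℝ) * ((n ^ 2 - 1 : ℕ) : ℝ) * (F2 : ℝ) := by exact_mod_cast hFF2
    rwa [cast4] at h'
  refine ⟨?_, ?_, ?_⟩
  · intro i _b
    have hS1 : #((Finset.univ : Finset (Finset (Fin (n - 1)))).filter
        (fun s => #s = n - c - 1 ∧ i ∈ s)) = C1 := by
      have h := cardSub1 (α := Fin (n - 1)) i (n - c - 2)
      rw [Fintype.card_fin, show n - c - 2 + 1 = n - c - 1 from by omega,
        show n - 1 - 1 = n - 2 from by omega, hC1def] at h
      exact h
    have h1 : #(Finset.filter (fun cl => i ∈ cl.2.1) (Finset.univ.filter (fun cl : Bool × Finset (Fin (n - 1)) × (Fin (n - 1) → Fin (n - 1) × Fin (n ^ 2 - 1)) × Finset (Fin (n ^ 2 + n - 1)) => #cl.2.1 = n - c - 1 ∧ (∀ i ∈ cl.2.1, (cl.2.2.1 i).1 ∉ cl.2.1) ∧ #cl.2.2.2 = n ^ 2)))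
        = 2 * (C1 * (F * ct)) := by
      have e : Finset.filter (fun cl => i ∈ cl.2.1) (Finset.univ.filter (fun cl : Bool × Finset (Fin (n - 1)) × (Fin (n - 1) → Fin (n - 1) × Fin (n ^ 2 - 1)) × Finset (Fin (n ^ 2 + n - 1)) => #cl.2.1 = n - c - 1 ∧ (∀ i ∈ cl.2.1, (cl.2.2.1 i).1 ∉ cl.2.1) ∧ #cl.2.2.2 = n ^ 2))
          = Finset.univ.filter (fun cl : Bool × Finset (Fin (n - 1)) × (Fin (n - 1) → Fin (n - 1) × Fin (n ^ 2 - 1)) × Finset (Fin (n ^ 2 + n - 1)) =>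
              True ∧ (#cl.2.1 = n - c - 1 ∧ i ∈ cl.2.1) ∧
                (∀ j ∈ cl.2.1, (cl.2.2.1 j).1 ∉ cl.2.1) ∧ #cl.2.2.2 = n ^ 2) := by
        rw [Finset.filter_filter]
        exact Finset.filter_congr (fun x _ => by tauto)
      rw [e, count4 (fun _ : Bool => True)
        (fun s : Finset (Fin (n - 1)) => #s = n - c - 1 ∧ i ∈ s)
        (fun (s : Finset (Fin (n - 1))) (f : Fin (n - 1) → Fin (n - 1) × Fin (n ^ 2 - 1)) =>
          ∀ j ∈ s, (f j).1 ∉ s)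
        (fun t : Finset (Fin (n ^ 2 + n - 1)) => #t = n ^ 2) F (fun S hS => hFS S hS.1),
        hbool2, hS1, hT0]
    have hden1 : (n : ℝ) - 1 ≠ 0 := hposA.ne'
    rw [h1, htot, div_eq_div_iff hden hden1]
    push_cast
    linear_combination (2 * (F : ℝ) * (ct : ℝ) * φ) * keyR
  · intro i i' b hii'
    have hS2 : #((Finset.univ : Finset (Finset (Fin (n - 1)))).filter
        (fun s => #s = n - c - 1 ∧ i' ∈ s ∧ i ∉ s)) = C2 := by
      have h := cardSub2 (α := Fin (n - 1)) i' i hii' (n - c - 2)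
      rw [Fintype.card_fin, show n - c - 2 + 1 = n - c - 1 from by omega,
        show n - 1 - 2 = n - 3 from by omega, hC2def] at h
      exact h
    have hFS2 : ∀ S : Finset (Fin (n - 1)), (#S = n - c - 1 ∧ i' ∈ S ∧ i ∉ S) →
        #((Finset.univ : Finset (Fin (n - 1) → Fin (n - 1) × Fin (n ^ 2 - 1))).filter
          (fun f => (∀ j ∈ S, (f j).1 ∉ S) ∧ f i' = (i, b))) = F2 := by
      rintro S ⟨hS, hi', hiS⟩
      rw [fcount_pin S i' i b hi' hiS, hS, show n - 1 - (n - c - 1) = c from by omega,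
        show n - c - 1 - 1 = n - c - 2 from by omega, hF2def]
    have h2 : #(Finset.filter (fun cl => i' ∈ cl.2.1 ∧ cl.2.2.1 i' = (i, b))
          (Finset.univ.filter (fun cl : Bool × Finset (Fin (n - 1)) × (Fin (n - 1) → Fin (n - 1) × Fin (n ^ 2 - 1)) × Finset (Fin (n ^ 2 + n - 1)) => #cl.2.1 = n - c - 1 ∧ (∀ i ∈ cl.2.1, (cl.2.2.1 i).1 ∉ cl.2.1) ∧ #cl.2.2.2 = n ^ 2)))
        = 2 * (C2 * (F2 * ct)) := by
      have e : Finset.filter (fun cl => i' ∈ cl.2.1 ∧ cl.2.2.1 i' = (i, b))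
            (Finset.univ.filter (fun cl : Bool × Finset (Fin (n - 1)) × (Fin (n - 1) → Fin (n - 1) × Fin (n ^ 2 - 1)) × Finset (Fin (n ^ 2 + n - 1)) => #cl.2.1 = n - c - 1 ∧ (∀ i ∈ cl.2.1, (cl.2.2.1 i).1 ∉ cl.2.1) ∧ #cl.2.2.2 = n ^ 2))
          = Finset.univ.filter (fun cl : Bool × Finset (Fin (n - 1)) × (Fin (n - 1) → Fin (n - 1) × Fin (n ^ 2 - 1)) × Finset (Fin (n ^ 2 + n - 1)) =>
              True ∧ (#cl.2.1 = n - c - 1 ∧ i' ∈ cl.2.1 ∧ i ∉ cl.2.1) ∧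
                ((∀ j ∈ cl.2.1, (cl.2.2.1 j).1 ∉ cl.2.1) ∧ cl.2.2.1 i' = (i, b)) ∧
                #cl.2.2.2 = n ^ 2) := by
        rw [Finset.filter_filter]
        refine Finset.filter_congr (fun x _ => ?_)
        constructor
        · rintro ⟨⟨h1, h2, h3⟩, h4, h5⟩
          have hiS : i ∉ x.2.1 := by
            have := h2 i' h4
            rw [h5] at this
            exact this
          exact ⟨trivial, ⟨h1, h4, hiS⟩, ⟨h2, h5⟩, h3⟩
        · rintro ⟨-, ⟨h1, h4, hiS⟩, ⟨h2, h5⟩, h3⟩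
          exact ⟨⟨h1, h2, h3⟩, h4, h5⟩
      rw [e, count4 (fun _ : Bool => True)
        (fun s : Finset (Fin (n - 1)) => #s = n - c - 1 ∧ i' ∈ s ∧ i ∉ s)
        (fun (s : Finset (Fin (n - 1))) (f : Fin (n - 1) → Fin (n - 1) × Fin (n ^ 2 - 1)) =>
          (∀ j ∈ s, (f j).1 ∉ s) ∧ f i' = (i, b))
        (fun t : Finset (Fin (n ^ 2 + n - 1)) => #t = n ^ 2) F2 hFS2,
        hbool2, hS2, hT0]
    have hden2 : ((n : ℝ) - 1) * ((n : ℝ) - 2) * ((n : ℝ) ^ 2 - 1) ≠ 0 :=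
      (mul_pos (mul_pos hposA hposB) hposC).ne'
    rw [h2, htot, div_eq_div_iff hden hden2]
    push_cast
    linear_combination (2 * φ * (F2 : ℝ) * (ct : ℝ) * ((n : ℝ) ^ 2 - 1)) * key2R
      - (2 * φ * ((n : ℝ) - (c : ℝ) - 1) * (C0 : ℝ) * (ct : ℝ)) * hFF2R
  · intro e r
    have hboolE : #((Finset.univ : Finset Bool).filter (fun x => x = e)) = 1 := by
      simp [Finset.filter_eq']
    have hT1 : #((Finset.univ : Finset (Finset (Fin (n ^ 2 + n - 1)))).filter
        (fun t => #t = n ^ 2 ∧ r ∈ t)) = ct' := by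
      have h := cardSub1 (α := Fin (n ^ 2 + n - 1)) r (n ^ 2 - 1)
      rw [Fintype.card_fin, show n ^ 2 - 1 + 1 = n ^ 2 from (by revert hB16; generalize n ^ 2 = N; intro h16; omega),
        show n ^ 2 + n - 1 - 1 = n ^ 2 + n - 2 from (by revert hB16; generalize n ^ 2 = N; intro h16; omega), hct'def] at h
      exact h
    have h3 : #(Finset.filter (fun cl => cl.1 = e ∧ r ∈ cl.2.2.2)
          (Finset.univ.filter (fun cl : Bool × Finset (Fin (n - 1)) × (Fin (n - 1) → Fin (n - 1) × Fin (n ^ 2 - 1)) × Finset (Fin (n ^ 2 + n - 1)) => #cl.2.1 = n - c - 1 ∧ (∀ i ∈ cl.2.1, (cl.2.2.1 i).1 ∉ cl.2.1) ∧ #cl.2.2.2 = n ^ 2)))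
        = 1 * (C0 * (F * ct')) := by
      have e3 : Finset.filter (fun cl => cl.1 = e ∧ r ∈ cl.2.2.2)
            (Finset.univ.filter (fun cl : Bool × Finset (Fin (n - 1)) × (Fin (n - 1) → Fin (n - 1) × Fin (n ^ 2 - 1)) × Finset (Fin (n ^ 2 + n - 1)) => #cl.2.1 = n - c - 1 ∧ (∀ i ∈ cl.2.1, (cl.2.2.1 i).1 ∉ cl.2.1) ∧ #cl.2.2.2 = n ^ 2))
          = Finset.univ.filter (fun cl : Bool × Finset (Fin (n - 1)) × (Fin (n - 1) → Fin (n - 1) × Fin (n ^ 2 - 1)) × Finset (Fin (n ^ 2 + n - 1)) =>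
              cl.1 = e ∧ #cl.2.1 = n - c - 1 ∧ (∀ j ∈ cl.2.1, (cl.2.2.1 j).1 ∉ cl.2.1) ∧
                (#cl.2.2.2 = n ^ 2 ∧ r ∈ cl.2.2.2)) := by
        rw [Finset.filter_filter]
        exact Finset.filter_congr (fun x _ => by tauto)
      rw [e3, count4 (fun x : Bool => x = e)
        (fun s : Finset (Fin (n - 1)) => #s = n - c - 1)
        (fun (s : Finset (Fin (n - 1))) (f : Fin (n - 1) → Fin (n - 1) × Fin (n ^ 2 - 1)) =>
          ∀ j ∈ s, (f j).1 ∉ s)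
        (fun t : Finset (Fin (n ^ 2 + n - 1)) => #t = n ^ 2 ∧ r ∈ t) F hFS,
        hboolE, hS0, hT1]
    have hden3 : 2 * ((n : ℝ) ^ 2 + (n : ℝ) - 1) ≠ 0 :=
      (mul_pos two_pos hposD).ne'
    rw [h3, htot, div_eq_div_iff hden hden3]
    push_cast
    linear_combination (2 * φ * (C0 : ℝ) * (F : ℝ)) * key3R
end

section
/- With type-B classes (classes on n - c of the first n - 1 facilities, none containing facilities n or n+1) and total measure ξ distributed uniformly: after round B each exclusive client of facility i ≤ n-1 is assigned to i with fraction ξ(n-c)/(n-1), and is assigned to each other facility i' ≤ n-1, i' ≠ i with fraction ξ(n-c)/((n-1)(n-2)(n^2-1)). -/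
/-!
For a fixed set `S` of `k` facilities the admissible assignment maps form a product set, so
their number depends only on `k`; the uniform measure on type-B classes is thus the uniform
measure on `k`-subsets of the `m = n - 1` facilities times a product measure on maps. Hence
the first fraction is `P(i ∈ S) = k / m`, and the second is
`P(i' ∈ S, i ∉ S) · P(f i' = (i, b) ∣ S) = k (m - k) / (m (m - 1)) · 1 / ((m - k) M)`
with `M = B - 1` exclusive clients per facility.
-/

open Finset

theorem Finset.card_filter_mem_powersetCard_succ {α : Type*} [DecidableEq α] {s : Finset α}
    {a : α} (ha : a ∈ s) (k : ℕ) :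
    #{t ∈ powersetCard (k + 1) s | a ∈ t} = (#s - 1).choose k := by
  have hs : s = insert a (s.erase a) := (insert_erase ha).symm
  have himage : {t ∈ powersetCard (k + 1) s | a ∈ t} =
      (powersetCard k (s.erase a)).image (insert a) := by
    rw [hs, powersetCard_succ_insert (notMem_erase a s), filter_union, erase_insert_eq_erase]
    ext t
    simp only [mem_union, mem_filter, mem_image, mem_powersetCard]
    grind
  rw [himage, card_image_of_injOn, card_powersetCard, card_erase_of_mem ha]
  intro t ht u hu htu
  rw [mem_coe, mem_powersetCard] at ht hu
  rw [← erase_insert (fun h => notMem_erase a s (ht.1 h)), htu,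
    erase_insert (fun h => notMem_erase a s (hu.1 h))]

theorem Finset.card_filter_forall_mem_pi {ι β : Type*} [Fintype ι] [DecidableEq ι] [Fintype β]
    (S : Finset ι) (t : ι → Finset β) [DecidablePred fun f : ι → β => ∀ j ∈ S, f j ∈ t j] :
    #{f : ι → β | ∀ j ∈ S, f j ∈ t j} = (∏ j ∈ S, #(t j)) * Fintype.card β ^ #Sᶜ := by
  have hpi : ({f | ∀ j ∈ S, f j ∈ t j} : Finset (ι → β)) =
      Fintype.piFinset fun j => if j ∈ S then t j else univ := by
    ext f
    simp only [mem_filter, mem_univ, true_and, Fintype.mem_piFinset]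
    refine forall_congr' fun j => ?_
    split_ifs <;> simp [*]
  rw [hpi, Fintype.card_piFinset]
  simp only [apply_ite card, card_univ]
  rw [prod_ite, prod_const]
  congr 3 <;> ext j <;> simp

theorem Finset.card_filter_prod_eq_card_mul {α β : Type*} [Fintype α] [Fintype β]
    {p : α → Prop} {q : α → β → Prop} [DecidablePred p] [∀ a, DecidablePred (q a)] {N : ℕ}
    (hq : ∀ a, p a → #{b | q a b} = N) :
    #{x : α × β | p x.1 ∧ q x.1 x.2} = #{a | p a} * N := by
  calc #{x : α × β | p x.1 ∧ q x.1 x.2}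
      = ∑ a, if p a then #{b | q a b} else 0 := by
        simp only [card_filter, ← univ_product_univ, sum_product, ite_and]
        exact sum_congr rfl fun a _ => by split_ifs <;> simp
    _ = ∑ a with p a, N := by
        rw [sum_filter]
        exact sum_congr rfl fun a _ => by split_ifs with h <;> simp [hq a, h]
    _ = #{a | p a} * N := by rw [sum_const, smul_eq_mul]

theorem Nat.add_two_mul_add_one_mul_choose (n k : ℕ) :
    (n + 2) * (n + 1) * n.choose k = (k + 1) * (n + 1 - k) * (n + 2).choose (k + 1) := by
  have h1 := Nat.add_one_mul_choose_eq n k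
  have h2 := Nat.choose_mul_succ_eq (n + 1) (k + 1)
  rw [show n + 1 + 1 - (k + 1) = n + 1 - k by omega] at h2
  calc (n + 2) * (n + 1) * n.choose k = (k + 1) * ((n + 1).choose (k + 1) * (n + 2)) := by
        rw [mul_assoc, h1]; ring
    _ = (k + 1) * (n + 1 - k) * (n + 2).choose (k + 1) := by rw [h2]; ring

section TypeB

variable {m M : ℕ}

abbrev TypeBClass (m M : ℕ) : Type := Finset (Fin m) × (Fin m → Fin m × Fin M)

/-- `cl.2 j = (i, b)` gives facility `j ∈ cl.1` the exclusive client `b` of facility `i`;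
the values of `cl.2` off `cl.1` are unconstrained. -/
def typeBClasses (m M k : ℕ) : Finset (TypeBClass m M) :=
  {cl | #cl.1 = k ∧ ∀ i ∈ cl.1, (cl.2 i).1 ∉ cl.1}

def numAdmissibleMaps (m M k : ℕ) : ℕ := ((m - k) * M) ^ k * (m * M) ^ (m - k)

theorem numAdmissibleMaps_pos {k : ℕ} (hkm : k < m) (hM : 0 < M) :
    0 < numAdmissibleMaps m M k :=
  Nat.mul_pos (pow_pos (Nat.mul_pos (by omega) hM) _) (pow_pos (Nat.mul_pos (by omega) hM) _)

theorem card_admissibleMaps (S : Finset (Fin m)) :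
    #{f : Fin m → Fin m × Fin M | ∀ j ∈ S, (f j).1 ∉ S} = numAdmissibleMaps m M #S := by
  have hfilter : univ.filter (fun f : Fin m → Fin m × Fin M => ∀ j ∈ S, (f j).1 ∉ S) =
      univ.filter fun f => ∀ j ∈ S, f j ∈ Sᶜ ×ˢ univ := by
    ext f; simp
  rw [hfilter, card_filter_forall_mem_pi S fun _ => Sᶜ ×ˢ univ, prod_const]
  simp [numAdmissibleMaps, card_compl]

theorem card_admissibleMaps_apply_eq {S : Finset (Fin m)} {i i' : Fin m} (hi' : i' ∈ S)
    (hi : i ∉ S) (b : Fin M) :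
    #{f : Fin m → Fin m × Fin M | (∀ j ∈ S, (f j).1 ∉ S) ∧ f i' = (i, b)} =
      ((m - #S) * M) ^ (#S - 1) * (m * M) ^ (m - #S) := by
  set t : Fin m → Finset (Fin m × Fin M) := fun j => if j = i' then {(i, b)} else Sᶜ ×ˢ univ
  have hfilter : univ.filter (fun f : Fin m → Fin m × Fin M =>
      (∀ j ∈ S, (f j).1 ∉ S) ∧ f i' = (i, b)) = univ.filter fun f => ∀ j ∈ S, f j ∈ t j := by
    ext f
    simp only [mem_filter, mem_univ, true_and, t]
    constructor
    · rintro ⟨hf, hfi'⟩ j hj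
      split_ifs with h
      · simp [h, hfi']
      · simpa using hf j hj
    · intro hf
      have hfi' : f i' = (i, b) := by simpa using hf i' hi'
      refine ⟨fun j hj => ?_, hfi'⟩
      by_cases h : j = i'
      · rwa [h, hfi']
      · simpa [h] using hf j hj
  have hcard : ∀ j ∈ S.erase i', #(t j) = (m - #S) * M := fun j hj => by
    simp [t, ne_of_mem_erase hj, card_compl]
  rw [hfilter, card_filter_forall_mem_pi S t, ← mul_prod_erase _ _ hi', prod_congr rfl hcard,
    prod_const, card_erase_of_mem hi']
  simp [t, card_compl]

theorem card_typeBClasses (k : ℕ) :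
    #(typeBClasses m M k) = m.choose k * numAdmissibleMaps m M k := by
  refine (card_filter_prod_eq_card_mul (p := fun S => #S = k)
    (q := fun S (f : Fin m → Fin m × Fin M) => ∀ i ∈ S, (f i).1 ∉ S)
    fun S hS => hS ▸ card_admissibleMaps S).trans ?_
  simp

theorem card_filter_mem_typeBClasses (k : ℕ) (i : Fin m) :
    #{cl ∈ typeBClasses m M (k + 1) | i ∈ cl.1} =
      (m - 1).choose k * numAdmissibleMaps m M (k + 1) := by
  have hfilter : {cl ∈ typeBClasses m M (k + 1) | i ∈ cl.1} =
      ({cl | (#cl.1 = k + 1 ∧ i ∈ cl.1) ∧ ∀ j ∈ cl.1, (cl.2 j).1 ∉ cl.1} :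
        Finset (TypeBClass m M)) := by
    ext cl; simp only [typeBClasses, mem_filter, mem_univ, true_and]; tauto
  rw [hfilter, card_filter_prod_eq_card_mul (p := fun S => #S = k + 1 ∧ i ∈ S)
    (q := fun S (f : Fin m → Fin m × Fin M) => ∀ j ∈ S, (f j).1 ∉ S)
    fun S hS => hS.1 ▸ card_admissibleMaps S]
  congr 1
  have hsets : ({S | #S = k + 1 ∧ i ∈ S} : Finset (Finset (Fin m))) =
      {S ∈ powersetCard (k + 1) (univ : Finset (Fin m)) | i ∈ S} := by
    ext S; simp
  rw [hsets, card_filter_mem_powersetCard_succ (mem_univ i), card_univ, Fintype.card_fin]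

theorem card_filter_apply_eq_typeBClasses (k : ℕ) {i i' : Fin m} (hne : i ≠ i') (b : Fin M) :
    (m - (k + 1)) * M * #{cl ∈ typeBClasses m M (k + 1) | i' ∈ cl.1 ∧ cl.2 i' = (i, b)} =
      (m - 2).choose k * numAdmissibleMaps m M (k + 1) := by
  have hfilter : {cl ∈ typeBClasses m M (k + 1) | i' ∈ cl.1 ∧ cl.2 i' = (i, b)} =
      ({cl | (#cl.1 = k + 1 ∧ i' ∈ cl.1 ∧ i ∉ cl.1) ∧
        ((∀ j ∈ cl.1, (cl.2 j).1 ∉ cl.1) ∧ cl.2 i' = (i, b))} : Finset (TypeBClass m M)) := by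
    ext ⟨S, f⟩
    simp only [typeBClasses, mem_filter, mem_univ, true_and]
    constructor
    · rintro ⟨⟨hk, hf⟩, hi', hfi'⟩
      exact ⟨⟨hk, hi', by simpa [hfi'] using hf i' hi'⟩, hf, hfi'⟩
    · rintro ⟨⟨hk, hi', -⟩, hf, hfi'⟩
      exact ⟨⟨hk, hf⟩, hi', hfi'⟩
  have hsets : ({S | #S = k + 1 ∧ i' ∈ S ∧ i ∉ S} : Finset (Finset (Fin m))) =
      {S ∈ powersetCard (k + 1) (univ.erase i) | i' ∈ S} := by
    ext S
    simp only [mem_filter, mem_univ, true_and, mem_powersetCard, subset_erase, subset_univ]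
    tauto
  rw [hfilter, card_filter_prod_eq_card_mul (p := fun S => #S = k + 1 ∧ i' ∈ S ∧ i ∉ S)
    (q := fun S (f : Fin m → Fin m × Fin M) => (∀ j ∈ S, (f j).1 ∉ S) ∧ f i' = (i, b))
    fun S hS => hS.1 ▸ card_admissibleMaps_apply_eq hS.2.1 hS.2.2 b,
    hsets, card_filter_mem_powersetCard_succ (mem_erase.2 ⟨hne.symm, mem_univ i'⟩),
    card_erase_of_mem (mem_univ i), card_univ, Fintype.card_fin, Nat.sub_sub,
    numAdmissibleMaps, Nat.add_sub_cancel, pow_succ]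
  ring

theorem typeBClasses_fraction_mem {k : ℕ} (hk : 0 < k) (hkm : k < m) (hM : 0 < M) (i : Fin m) :
    (#{cl ∈ typeBClasses m M k | i ∈ cl.1} : ℝ) / #(typeBClasses m M k) = k / m := by
  obtain ⟨k, rfl⟩ := Nat.exists_eq_add_one_of_ne_zero hk.ne'
  obtain ⟨p, rfl⟩ : ∃ p, m = p + 1 := ⟨m - 1, by omega⟩
  have hN := numAdmissibleMaps_pos hkm hM
  have hC : 0 < (p + 1).choose (k + 1) := Nat.choose_pos (by omega)
  rw [card_filter_mem_typeBClasses, card_typeBClasses, Nat.add_sub_cancel, Nat.cast_mul,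
    Nat.cast_mul, mul_div_mul_right _ _ (by positivity),
    div_eq_div_iff (by positivity) (by positivity)]
  exact_mod_cast (by linarith [Nat.add_one_mul_choose_eq p k] :
    p.choose k * (p + 1) = (k + 1) * (p + 1).choose (k + 1))

theorem typeBClasses_fraction_apply_eq {k : ℕ} (hk : 0 < k) (hkm : k < m) (hM : 0 < M)
    {i i' : Fin m} (hne : i ≠ i') (b : Fin M) :
    (#{cl ∈ typeBClasses m M k | i' ∈ cl.1 ∧ cl.2 i' = (i, b)} : ℝ) / #(typeBClasses m M k) =
      k / (m * (m - 1) * M) := by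
  obtain ⟨k, rfl⟩ := Nat.exists_eq_add_one_of_ne_zero hk.ne'
  obtain ⟨p, rfl⟩ : ∃ p, m = p + 2 := ⟨m - 2, by omega⟩
  have hN := numAdmissibleMaps_pos hkm hM
  have hC : 0 < (p + 2).choose (k + 1) := Nat.choose_pos (by omega)
  have hcount : ((p + 1 - k : ℕ) : ℝ) * M *
      #{cl ∈ typeBClasses (p + 2) M (k + 1) | i' ∈ cl.1 ∧ cl.2 i' = (i, b)} =
        p.choose k * numAdmissibleMaps (p + 2) M (k + 1) := by
    have h := card_filter_apply_eq_typeBClasses k hne b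
    rw [show p + 2 - (k + 1) = p + 1 - k by omega, Nat.add_sub_cancel] at h
    exact_mod_cast h
  have hchoose : ((p + 2) * (p + 1) * p.choose k : ℝ) =
      (k + 1) * ((p + 1 - k : ℕ) : ℝ) * (p + 2).choose (k + 1) := by
    exact_mod_cast Nat.add_two_mul_add_one_mul_choose p k
  have hA : ((p + 1 - k : ℕ) : ℝ) ≠ 0 := by exact_mod_cast (by omega : p + 1 - k ≠ 0)
  rw [card_typeBClasses, show ((p + 2 : ℕ) : ℝ) - 1 = p + 1 by push_cast; ring,
    div_eq_div_iff (by positivity) (by positivity)]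
  refine mul_left_cancel₀ hA ?_
  push_cast
  linear_combination ((p + 2) * (p + 1) : ℝ) * hcount +
    (numAdmissibleMaps (p + 2) M (k + 1) : ℝ) * hchoose

end TypeB

theorem roundB_fractions_general (n c : ℕ) (hc : 2 ≤ c) (hcn : c + 2 ≤ n) (ξ : ℝ) :
    let B := n ^ 2
    let ClassB := Finset (Fin (n - 1)) × (Fin (n - 1) → Fin (n - 1) × Fin (B - 1))
    let ℬ : Finset ClassB := Finset.univ.filter (fun cl =>
      cl.1.card = n - c ∧ ∀ i ∈ cl.1, (cl.2 i).1 ∉ cl.1)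
    (∀ i : Fin (n - 1), ∀ _b : Fin (B - 1),
      ξ * ((ℬ.filter (fun cl => i ∈ cl.1)).card : ℝ) / ℬ.card =
        ξ * ((n : ℝ) - c) / ((n : ℝ) - 1)) ∧
    (∀ i i' : Fin (n - 1), ∀ b : Fin (B - 1), i ≠ i' →
      ξ * ((ℬ.filter (fun cl => i' ∈ cl.1 ∧ cl.2 i' = (i, b))).card : ℝ) / ℬ.card =
        ξ * ((n : ℝ) - c) /
          (((n : ℝ) - 1) * ((n : ℝ) - 2) * ((n : ℝ) ^ 2 - 1))) := by
  intro B ClassB ℬ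
  have hk : 0 < n - c := by omega
  have hkm : n - c < n - 1 := by omega
  have hn2 : 1 < n ^ 2 := Nat.one_lt_pow two_ne_zero (by omega)
  have hM : 0 < n ^ 2 - 1 := Nat.sub_pos_of_lt hn2
  have hk_cast : ((n - c : ℕ) : ℝ) = n - c := Nat.cast_sub (by omega)
  have hm_cast : ((n - 1 : ℕ) : ℝ) = n - 1 := by rw [Nat.cast_sub (by omega), Nat.cast_one]
  have hM_cast : ((n ^ 2 - 1 : ℕ) : ℝ) = n ^ 2 - 1 := by
    rw [Nat.cast_sub hn2.le, Nat.cast_pow, Nat.cast_one]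
  refine ⟨fun i _ => ?_, fun i i' b hne => ?_⟩
  · rw [mul_div_assoc, mul_div_assoc]
    congr 1
    refine (typeBClasses_fraction_mem (m := n - 1) (M := n ^ 2 - 1) hk hkm hM i).trans ?_
    rw [hk_cast, hm_cast]
  · rw [mul_div_assoc, mul_div_assoc]
    congr 1
    refine (typeBClasses_fraction_apply_eq (m := n - 1) (M := n ^ 2 - 1) hk hkm hM hne b).trans ?_
    rw [hk_cast, hm_cast, hM_cast]
    ring

/-- Round B (Lemma `roundB`): with measure `ξ` spread uniformly over all admissible
type-B classes (a set `S` of `n - c` of the first `n - 1` facilities, each taking all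
its `B - 1` exclusive clients plus one exclusive client of a facility outside `S`;
neither far facility is contained): each exclusive client of facility `i ≤ n-1` is
assigned to `i` with fraction `ξ (n-c)/(n-1)` and to each other facility `i' ≤ n-1`
with fraction `ξ (n-c)/((n-1)(n-2)(n²-1))`. -/
theorem roundB_fractions (n c : ℕ) (hc : 2 ≤ c) (hcn : c + 2 ≤ n) (ξ : ℝ) (hξ : 0 < ξ) :
    let B := n ^ 2
    let ClassB := Finset (Fin (n - 1)) × (Fin (n - 1) → Fin (n - 1) × Fin (B - 1))
    let ℬ : Finset ClassB := Finset.univ.filter (fun cl =>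
      cl.1.card = n - c ∧ ∀ i ∈ cl.1, (cl.2 i).1 ∉ cl.1)
    (∀ i : Fin (n - 1), ∀ _b : Fin (B - 1),
      ξ * ((ℬ.filter (fun cl => i ∈ cl.1)).card : ℝ) / ℬ.card =
        ξ * ((n : ℝ) - c) / ((n : ℝ) - 1)) ∧
    (∀ i i' : Fin (n - 1), ∀ b : Fin (B - 1), i ≠ i' →
      ξ * ((ℬ.filter (fun cl => i' ∈ cl.1 ∧ cl.2 i' = (i, b))).card : ℝ) / ℬ.card =
        ξ * ((n : ℝ) - c) /
          (((n : ℝ) - 1) * ((n : ℝ) - 2) * ((n : ℝ) ^ 2 - 1))) :=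
  roundB_fractions_general n c hc hcn ξ
end

section
/- Setting φ = (n^2+n-1)/n^2 and ξ = ((n^2-1)/n^2 - φ(n-c-1)/(n-1))·(n-1)/(n-c), the sum of the round-A and round-B fractional assignments yields: each facility i ≤ n-1 opened with y_i = (n^2-1)/n^2, its exclusive clients assigned with fraction (n^2-1)/n^2 to it and 1/(n^2(n-2)) to each other first-(n-1) facility; facilities n, n+1 opened with y = (n^2+n-1)/(2n^2), each of their exclusive clients assigned 1/2 to each. In particular every client's total assignment equals 1 and ∑_j x_{ij} = B·y_i for each facility. -/
/-!
Every claim is a rational identity in `n` and `c`. The round-B weight `ξ` is chosen exactly so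
that the round-A share `φ (n-c-1)/(n-1)` and the round-B share `ξ (n-c)/(n-1)` of an exclusive
client add up to the target `(n²-1)/n²`; the share towards each other first-`(n-1)` facility is
the same sum divided by `(n-2)(n²-1)`.
-/

section

variable {K : Type*} [Field K]

theorem add_sub_div_mul_div_eq (a y q d : K) (hq : q ≠ 0) (hd : d ≠ 0) :
    a + (y - a) * d / q * q / d = y := by
  field_simp
  ring

theorem div_add_div_mul_sub_div_eq (φ p y q d e : K) (hq : q ≠ 0) (hd : d ≠ 0) :
    φ * p / (d * e) + (y - φ * p / d) * d / q * q / (d * e) = y / e := by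
  rw [← div_div, ← div_div, ← add_div, add_sub_div_mul_div_eq _ _ _ _ hq hd]

theorem sq_sub_one_div_sq_add_eq_one {n : K} (hn : n ≠ 0) (hn2 : n - 2 ≠ 0) :
    (n ^ 2 - 1) / n ^ 2 + (n - 2) * (1 / (n ^ 2 * (n - 2))) = 1 := by
  field_simp
  ring

end

theorem combined_bad_solution_general (n c : ℕ) (hn : 3 ≤ n) (hcn : c + 2 ≤ n) :
    let B : ℝ := (n : ℝ) ^ 2
    let φ : ℝ := ((n : ℝ) ^ 2 + n - 1) / (n : ℝ) ^ 2
    let ξ : ℝ := (((n : ℝ) ^ 2 - 1) / (n : ℝ) ^ 2 -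
        φ * ((n : ℝ) - c - 1) / ((n : ℝ) - 1)) * ((n : ℝ) - 1) / ((n : ℝ) - c)
    -- exclusive clients assigned to their own facility
    (φ * ((n : ℝ) - c - 1) / ((n : ℝ) - 1) + ξ * ((n : ℝ) - c) / ((n : ℝ) - 1) =
      ((n : ℝ) ^ 2 - 1) / (n : ℝ) ^ 2) ∧
    -- exclusive clients assigned to other first-(n-1) facilities
    (φ * ((n : ℝ) - c - 1) / (((n : ℝ) - 1) * ((n : ℝ) - 2) * ((n : ℝ) ^ 2 - 1)) +
      ξ * ((n : ℝ) - c) / (((n : ℝ) - 1) * ((n : ℝ) - 2) * ((n : ℝ) ^ 2 - 1)) =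
      1 / ((n : ℝ) ^ 2 * ((n : ℝ) - 2))) ∧
    -- shared clients assigned to each of the far facilities with fraction 1/2
    (φ * (n : ℝ) ^ 2 / (2 * ((n : ℝ) ^ 2 + (n : ℝ) - 1)) = 1 / 2) ∧
    -- opening value of the far facilities
    (φ / 2 = ((n : ℝ) ^ 2 + n - 1) / (2 * (n : ℝ) ^ 2)) ∧
    -- total assignment of each exclusive client equals 1
    (((n : ℝ) ^ 2 - 1) / (n : ℝ) ^ 2 +
      ((n : ℝ) - 2) * (1 / ((n : ℝ) ^ 2 * ((n : ℝ) - 2))) = 1) ∧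
    -- total assignment of each shared client equals 1
    ((1 : ℝ) / 2 + 1 / 2 = 1) ∧
    -- ∑_j x_{ij} = B y_i for i ≤ n-1
    ((B - 1) * (((n : ℝ) ^ 2 - 1) / (n : ℝ) ^ 2) +
      ((n : ℝ) - 2) * (B - 1) * (1 / ((n : ℝ) ^ 2 * ((n : ℝ) - 2))) =
      B * (((n : ℝ) ^ 2 - 1) / (n : ℝ) ^ 2)) ∧
    -- ∑_j x_{ij} = B y_i for facilities n, n+1
    ((B + (n : ℝ) - 1) * (1 / 2) = B * (((n : ℝ) ^ 2 + n - 1) / (2 * (n : ℝ) ^ 2))) := by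
  dsimp only
  have hn3 : (3 : ℝ) ≤ n := by exact_mod_cast hn
  have hcn' : (c : ℝ) + 2 ≤ n := by exact_mod_cast hcn
  have hn0 : (n : ℝ) ≠ 0 := by positivity
  have hn1 : (n : ℝ) - 1 ≠ 0 := by linarith
  have hn2 : (n : ℝ) - 2 ≠ 0 := by linarith
  have hnc : (n : ℝ) - c ≠ 0 := by linarith
  have hsq : (n : ℝ) ^ 2 - 1 ≠ 0 := by nlinarith
  have hm : (n : ℝ) ^ 2 + n - 1 ≠ 0 := by nlinarith
  have hexcl := sq_sub_one_div_sq_add_eq_one hn0 hn2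
  refine ⟨add_sub_div_mul_div_eq _ _ _ _ hnc hn1, ?_, ?_, ?_, hexcl, by norm_num, ?_, ?_⟩
  · rw [mul_assoc (_ - 1), div_add_div_mul_sub_div_eq _ _ _ _ _ _ hnc hn1]
    field_simp
  · rw [div_mul_cancel₀ _ (pow_ne_zero 2 hn0), div_mul_cancel_right₀ hm, one_div]
  · rw [div_div, mul_comm (2 : ℝ)]
  · rw [mul_comm ((n : ℝ) - 2), mul_assoc, ← mul_add, hexcl]
    field_simp
  · field_simp

/-- Combining rounds A and B with `φ = (n²+n-1)/n²` and
`ξ = ((n²-1)/n² - φ(n-c-1)/(n-1)) (n-1)/(n-c)` yields the bad LBFL solution: each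
facility `i ≤ n-1` is opened with `y_i = (n²-1)/n²`, its exclusive clients assigned to
it with fraction `(n²-1)/n²` and to each other first-(n-1) facility with fraction
`1/(n²(n-2))`; facilities `n, n+1` are opened with `y = (n²+n-1)/(2n²)` and each of
their exclusive clients assigned `1/2` to each; every client's total assignment is `1`
and `∑_j x_{ij} = B y_i` for every facility, where `B = n²`. -/
theorem combined_bad_solution (n c : ℕ) (hn : 3 ≤ n) (hc : 2 ≤ c) (hcn : c + 2 ≤ n) :
    let B : ℝ := (n : ℝ) ^ 2
    let φ : ℝ := ((n : ℝ) ^ 2 + n - 1) / (n : ℝ) ^ 2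
    let ξ : ℝ := (((n : ℝ) ^ 2 - 1) / (n : ℝ) ^ 2 -
        φ * ((n : ℝ) - c - 1) / ((n : ℝ) - 1)) * ((n : ℝ) - 1) / ((n : ℝ) - c)
    -- exclusive clients assigned to their own facility
    (φ * ((n : ℝ) - c - 1) / ((n : ℝ) - 1) + ξ * ((n : ℝ) - c) / ((n : ℝ) - 1) =
      ((n : ℝ) ^ 2 - 1) / (n : ℝ) ^ 2) ∧
    -- exclusive clients assigned to other first-(n-1) facilities
    (φ * ((n : ℝ) - c - 1) / (((n : ℝ) - 1) * ((n : ℝ) - 2) * ((n : ℝ) ^ 2 - 1)) +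
      ξ * ((n : ℝ) - c) / (((n : ℝ) - 1) * ((n : ℝ) - 2) * ((n : ℝ) ^ 2 - 1)) =
      1 / ((n : ℝ) ^ 2 * ((n : ℝ) - 2))) ∧
    -- shared clients assigned to each of the far facilities with fraction 1/2
    (φ * (n : ℝ) ^ 2 / (2 * ((n : ℝ) ^ 2 + (n : ℝ) - 1)) = 1 / 2) ∧
    -- opening value of the far facilities
    (φ / 2 = ((n : ℝ) ^ 2 + n - 1) / (2 * (n : ℝ) ^ 2)) ∧
    -- total assignment of each exclusive client equals 1
    (((n : ℝ) ^ 2 - 1) / (n : ℝ) ^ 2 +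
      ((n : ℝ) - 2) * (1 / ((n : ℝ) ^ 2 * ((n : ℝ) - 2))) = 1) ∧
    -- total assignment of each shared client equals 1
    ((1 : ℝ) / 2 + 1 / 2 = 1) ∧
    -- ∑_j x_{ij} = B y_i for i ≤ n-1
    ((B - 1) * (((n : ℝ) ^ 2 - 1) / (n : ℝ) ^ 2) +
      ((n : ℝ) - 2) * (B - 1) * (1 / ((n : ℝ) ^ 2 * ((n : ℝ) - 2))) =
      B * (((n : ℝ) ^ 2 - 1) / (n : ℝ) ^ 2)) ∧
    -- ∑_j x_{ij} = B y_i for facilities n, n+1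
    ((B + (n : ℝ) - 1) * (1 / 2) = B * (((n : ℝ) ^ 2 + n - 1) / (2 * (n : ℝ) ^ 2))) :=
  combined_bad_solution_general n c hn hcn
end

section
/- In the metric where facilities 1,...,n-1 with their exclusive clients sit on distinct vertices of a regular (n-2)-simplex of edge length D in R^{n-2}, and facilities n, n+1 with their n^2+n-1 exclusive clients sit at distance D' = Ω(nD) from every simplex vertex, with all opening costs 0 and lower bound B = n^2: every integral feasible LBFL solution has cost Ω(n^2 D). Specifically, either some client far from the simplex is assigned to a simplex facility or vice versa (cost ≥ D' per such assignment, with at least n needed to open all simplex facilities), or some simplex facility is closed and its B - 1 exclusive clients travel distance ≥ D each. -/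
/-- Integral lower bound for the LBFL simplex instance: facilities are the `n-1`
simplex facilities plus the two far facilities; clients are the `B - 1 = n² - 1`
exclusive clients of each simplex facility plus the `n² + n - 1` far clients. Clients
co-located with a facility are at distance 0 from it, distinct simplex vertices are at
distance at least `D`, and far clients / far facilities are at distance at least
`D' ≥ nD` from the simplex. Every assignment in which each used facility serves at
least `B = n²` clients has cost at least `(n² - n) D = Ω(n² D)`. -/
theorem lbfl_integral_lower_bound (n : ℕ) (hn : 3 ≤ n) (D D' : ℝ)
    (hD : 0 < D) (hD' : (n : ℝ) * D ≤ D')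
    (dist : (Fin (n - 1) ⊕ Bool) →
      ((Fin (n - 1) × Fin (n ^ 2 - 1)) ⊕ Fin (n ^ 2 + n - 1)) → ℝ)
    (hpos : ∀ f j, 0 ≤ dist f j)
    (hsimplex : ∀ i i' : Fin (n - 1), ∀ b, i ≠ i' →
      D ≤ dist (Sum.inl i') (Sum.inl (i, b)))
    (hfar1 : ∀ i : Fin (n - 1), ∀ r, D' ≤ dist (Sum.inl i) (Sum.inr r))
    (hfar2 : ∀ e : Bool, ∀ i b, D' ≤ dist (Sum.inr e) (Sum.inl (i, b)))
    (a : ((Fin (n - 1) × Fin (n ^ 2 - 1)) ⊕ Fin (n ^ 2 + n - 1)) → (Fin (n - 1) ⊕ Bool))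
    (hlb : ∀ f, (∃ j, a j = f) →
      n ^ 2 ≤ (Finset.univ.filter (fun j => a j = f)).card) :
    ((n : ℝ) ^ 2 - n) * D ≤ ∑ j, dist (a j) j := by
  have hn1 : 1 ≤ n := by omega
  have h1n : (1 : ℝ) ≤ (n : ℝ) := by exact_mod_cast hn1
  have hDD' : D ≤ D' := le_trans (by nlinarith) hD'
  have hD'0 : 0 ≤ D' := le_trans (by positivity) hD'
  by_cases hall : ∀ i : Fin (n - 1), ∃ j, a j = Sum.inl i
  · -- all simplex facilities are used: at least n-1 far clients go to the simplex
    set F : Finset (Fin (n ^ 2 + n - 1)) :=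
      Finset.univ.filter (fun r => ∃ i, a (Sum.inr r) = Sum.inl i) with hF
    set T : Finset ((Fin (n - 1) × Fin (n ^ 2 - 1)) ⊕ Fin (n ^ 2 + n - 1)) :=
      Finset.univ.filter (fun j => ∃ i, a j = Sum.inl i) with hT
    have hTcard : (n - 1) * n ^ 2 ≤ T.card := by
      have hbi : T = Finset.univ.biUnion
          (fun i : Fin (n - 1) => Finset.univ.filter (fun j => a j = Sum.inl i)) := by
        ext j
        simp [hT]
      rw [hbi, Finset.card_biUnion]
      · calc (n - 1) * n ^ 2 = ∑ _i : Fin (n - 1), n ^ 2 := by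
              simp [Finset.card_univ, mul_comm]
          _ ≤ _ := Finset.sum_le_sum (fun i _ => hlb (Sum.inl i) (hall i))
      · intro x _ y _ hxy
        simp only [Finset.disjoint_left, Finset.mem_filter]
        rintro j ⟨_, h1⟩ ⟨_, h2⟩
        exact hxy (by simpa [h1] using h2)
    have hTsub : T ⊆ (Finset.univ.image Sum.inl) ∪ (F.image Sum.inr) := by
      intro j hj
      rcases j with p | r
      · simp
      · simp only [hT, Finset.mem_filter, Finset.mem_univ, true_and] at hj
        simp only [Finset.mem_union, Finset.mem_image]
        exact Or.inr ⟨r, by simp [hF, hj], rfl⟩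
    have hTub : T.card ≤ (n - 1) * (n ^ 2 - 1) + F.card := by
      calc T.card ≤ ((Finset.univ.image Sum.inl) ∪ (F.image Sum.inr)).card :=
            Finset.card_le_card hTsub
        _ ≤ (Finset.univ.image (Sum.inl : _ → _)).card + (F.image Sum.inr).card :=
            Finset.card_union_le _ _
        _ ≤ (n - 1) * (n ^ 2 - 1) + F.card := by
            gcongr
            · calc (Finset.univ.image (Sum.inl : _ → _)).card
                  ≤ (Finset.univ : Finset (Fin (n - 1) × Fin (n ^ 2 - 1))).card :=
                    Finset.card_image_le
                _ = (n - 1) * (n ^ 2 - 1) := by simp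
            · exact Finset.card_image_le
    have hFcard : n - 1 ≤ F.card := by
      have key : (n - 1) * (n ^ 2 - 1) + (n - 1) = (n - 1) * n ^ 2 := by
        have h1 : n ^ 2 - 1 + 1 = n ^ 2 := by
          have : 1 ≤ n ^ 2 := Nat.one_le_pow _ _ (by omega)
          omega
        rw [← Nat.mul_succ, Nat.succ_eq_add_one, h1]
      omega
    have hsum : ∑ r ∈ F, dist (a (Sum.inr r)) (Sum.inr r) ≤ ∑ j, dist (a j) j := by
      calc ∑ r ∈ F, dist (a (Sum.inr r)) (Sum.inr r)
          = ∑ j ∈ F.image Sum.inr, dist (a j) j := by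
            rw [Finset.sum_image (by intro x _ y _ h; exact Sum.inr.inj h)]
        _ ≤ ∑ j, dist (a j) j :=
            Finset.sum_le_sum_of_subset_of_nonneg (Finset.subset_univ _)
              (fun j _ _ => hpos _ _)
    have hterm : ∀ r ∈ F, D' ≤ dist (a (Sum.inr r)) (Sum.inr r) := by
      intro r hr
      simp only [hF, Finset.mem_filter, Finset.mem_univ, true_and] at hr
      obtain ⟨i, hi⟩ := hr
      rw [hi]
      exact hfar1 i r
    have hlow : (F.card : ℝ) * D' ≤ ∑ r ∈ F, dist (a (Sum.inr r)) (Sum.inr r) := by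
      calc (F.card : ℝ) * D' = ∑ _r ∈ F, D' := by rw [Finset.sum_const, nsmul_eq_mul]
        _ ≤ _ := Finset.sum_le_sum hterm
    calc ((n : ℝ) ^ 2 - n) * D = ((n : ℝ) - 1) * ((n : ℝ) * D) := by ring
      _ ≤ ((n : ℝ) - 1) * D' := by
          apply mul_le_mul_of_nonneg_left hD'
          have : (1 : ℝ) ≤ (n : ℝ) := by exact_mod_cast hn1
          linarith
      _ ≤ (F.card : ℝ) * D' := by
          apply mul_le_mul_of_nonneg_right _ hD'0
          have : ((n - 1 : ℕ) : ℝ) ≤ (F.card : ℝ) := by exact_mod_cast hFcard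
          calc ((n : ℝ) - 1) = ((n - 1 : ℕ) : ℝ) := by
                have := hn1; push_cast [Nat.cast_sub hn1]; ring
            _ ≤ _ := this
      _ ≤ ∑ r ∈ F, dist (a (Sum.inr r)) (Sum.inr r) := hlow
      _ ≤ _ := hsum
  · -- some simplex facility i is not used: its n²-1 clients pay at least D each
    push_neg at hall
    obtain ⟨i, hi⟩ := hall
    have hterm : ∀ b : Fin (n ^ 2 - 1), D ≤ dist (a (Sum.inl (i, b))) (Sum.inl (i, b)) := by
      intro b
      rcases h : a (Sum.inl (i, b)) with i' | e
      · refine hsimplex i i' b ?_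
        rintro rfl
        exact hi (Sum.inl (i, b)) h
      · exact le_trans hDD' (hfar2 e i b)
    have hsum : ∑ b : Fin (n ^ 2 - 1), dist (a (Sum.inl (i, b))) (Sum.inl (i, b))
        ≤ ∑ j, dist (a j) j := by
      calc ∑ b : Fin (n ^ 2 - 1), dist (a (Sum.inl (i, b))) (Sum.inl (i, b))
          = ∑ j ∈ Finset.univ.image (fun b : Fin (n ^ 2 - 1) => Sum.inl (i, b)),
              dist (a j) j := by
            rw [Finset.sum_image]
            intro x _ y _ h
            exact (Prod.mk.injEq .. ▸ Sum.inl.inj h).2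
        _ ≤ ∑ j, dist (a j) j :=
            Finset.sum_le_sum_of_subset_of_nonneg (Finset.subset_univ _)
              (fun j _ _ => hpos _ _)
    have hlow : ((n ^ 2 - 1 : ℕ) : ℝ) * D
        ≤ ∑ b : Fin (n ^ 2 - 1), dist (a (Sum.inl (i, b))) (Sum.inl (i, b)) := by
      calc ((n ^ 2 - 1 : ℕ) : ℝ) * D = ∑ _b : Fin (n ^ 2 - 1), D := by
            rw [Finset.sum_const, nsmul_eq_mul, Finset.card_univ, Fintype.card_fin]
        _ ≤ _ := Finset.sum_le_sum (fun b _ => hterm b)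
    have hcast : ((n : ℝ) ^ 2 - n) * D ≤ ((n ^ 2 - 1 : ℕ) : ℝ) * D := by
      apply mul_le_mul_of_nonneg_right _ hD.le
      have h1 : 1 ≤ n ^ 2 := Nat.one_le_pow _ _ (by omega)
      have : ((n ^ 2 - 1 : ℕ) : ℝ) = (n : ℝ) ^ 2 - 1 := by push_cast [Nat.cast_sub h1]; ring
      rw [this]
      have : (1 : ℝ) ≤ (n : ℝ) := by exact_mod_cast hn1
      linarith
    exact le_trans hcast (le_trans hlow hsum)
end

section
/- For the CFL proper-relaxation construction with n facilities, capacity U = n^2, (n-1)U + 1 clients, distances all 0, opening costs f_n = 1 and f_i = 0 for i ≤ n-1: the fractional solution with y_i = 1 (i ≤ n-1), y_n = 1/n^2, x_{nj} = (U/n^2)/((n-1)U+1) and x_{ij} = (1 - x_{nj})/(n-1) for i ≤ n-1 satisfies the classic CFL LP constraints and has cost 1/n^2, while every integral feasible solution must open facility n (since total capacity of the other facilities is (n-1)U < (n-1)U + 1) and hence has cost at least 1; the integrality gap is therefore at least n^2. -/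
/-! Facility `n` takes a `1/m` share of each of the `m = (n-1)U + 1` clients, so its
capacity constraint holds with `y_n = 1/U = 1/n²`; the remaining `1 - 1/m` of every client is
spread evenly over the `n - 1` free facilities, which then carry exactly `(m - 1)/(n - 1) = U`
each. An integral solution cannot do this: the free facilities hold only `(n-1)U < m`
clients, so facility `n` must be opened, at cost 1. -/

open Finset

variable {ι C : Type*} [Fintype ι] [Fintype C]

theorem Fintype.sum_ite_eq_add_card_sub_one_mul {R : Type*} [Ring R] [DecidableEq ι] (i₀ : ι)
    (a b : R) :
    ∑ i, (if i = i₀ then a else b) = a + ((Fintype.card ι : R) - 1) * b := by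
  rw [← add_sum_erase _ _ (mem_univ i₀), if_pos rfl,
    Finset.sum_congr rfl fun i hi => if_neg (ne_of_mem_erase hi), sum_const,
    card_erase_of_mem (mem_univ _), card_univ, nsmul_eq_mul,
    Nat.cast_pred (Fintype.card_pos_iff.2 ⟨i₀⟩)]

namespace CFL

/-- Feasibility for the classic LP relaxation of capacitated facility location with
uniform capacity `U` and unit demands. -/
structure LPFeasible (U : ℝ) (x : ι → C → ℝ) (y : ι → ℝ) : Prop where
  le_open : ∀ i j, x i j ≤ y i
  sum_assign : ∀ j, ∑ i, x i j = 1
  sum_le_capacity : ∀ i, ∑ j, x i j ≤ U * y i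
  open_mem_Icc : ∀ i, 0 ≤ y i ∧ y i ≤ 1
  assign_mem_Icc : ∀ i j, 0 ≤ x i j ∧ x i j ≤ 1

theorem lpFeasible_proper [DecidableEq ι] (i₀ : ι) {U k a : ℝ} (hU : 1 ≤ U) (hk : 1 ≤ k)
    (hι : (Fintype.card ι : ℝ) = k + 1) (hC : (Fintype.card C : ℝ) = k * U + 1)
    (ha : a = (k * U + 1)⁻¹) :
    LPFeasible U (fun i (_ : C) => if i = i₀ then a else (1 - a) / k)
      (fun i => if i = i₀ then 1 / U else 1) := by
  have hm : 0 < k * U + 1 := by positivity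
  have ha_pos : 0 < a := ha ▸ inv_pos.2 hm
  have ha_le : a ≤ 1 / U := by
    rw [ha, ← one_div]; exact one_div_le_one_div_of_le (by positivity) (by nlinarith)
  have hU_inv : 1 / U ≤ 1 := (div_le_one (by positivity)).2 hU
  have hb_le : (1 - a) / k ≤ 1 := (div_le_one (by positivity)).2 (by linarith)
  have hb_nonneg : 0 ≤ (1 - a) / k := div_nonneg (by linarith) (by positivity)
  refine ⟨fun i _ => ?_, fun _ => ?_, fun i => ?_, fun i => ?_, fun i _ => ?_⟩
  · split_ifs <;> assumption
  · rw [Fintype.sum_ite_eq_add_card_sub_one_mul, hι]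
    field_simp
    ring
  · rw [sum_const, card_univ, nsmul_eq_mul, hC]
    refine le_of_eq ?_
    split_ifs
    · rw [ha, mul_inv_cancel₀ hm.ne', mul_one_div_cancel (by positivity)]
    · rw [ha, mul_one]; field_simp; ring
  · split_ifs
    · exact ⟨by positivity, hU_inv⟩
    · exact ⟨zero_le_one, le_rfl⟩
  · split_ifs
    · exact ⟨ha_pos.le, ha_le.trans hU_inv⟩
    · exact ⟨hb_nonneg, hb_le⟩

theorem card_le_mul_sum_open {U : ℕ} {x : ι → C → ℕ} {y : ι → ℕ}
    (hassign : ∀ j, ∑ i, x i j = 1) (hcap : ∀ i, ∑ j, x i j ≤ U * y i) :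
    Fintype.card C ≤ U * ∑ i, y i :=
  calc Fintype.card C = ∑ j, ∑ i, x i j := by simp [hassign]
    _ = ∑ i, ∑ j, x i j := sum_comm
    _ ≤ ∑ i, U * y i := sum_le_sum fun i _ => hcap i
    _ = U * ∑ i, y i := (mul_sum _ _ _).symm

theorem open_eq_one_of_mul_card_sub_one_lt [DecidableEq ι] {U : ℕ} {x : ι → C → ℕ}
    {y : ι → ℕ} (hy : ∀ i, y i ≤ 1) (hassign : ∀ j, ∑ i, x i j = 1)
    (hcap : ∀ i, ∑ j, x i j ≤ U * y i) (hC : U * (Fintype.card ι - 1) < Fintype.card C)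
    (i₀ : ι) : y i₀ = 1 := by
  by_contra hne
  have hy₀ : y i₀ = 0 := by have := hy i₀; omega
  have hsum : ∑ i, y i ≤ Fintype.card ι - 1 :=
    calc ∑ i, y i = ∑ i ∈ univ.erase i₀, y i := by
          rw [← add_sum_erase _ _ (mem_univ i₀), hy₀, zero_add]
      _ ≤ ∑ _i ∈ univ.erase i₀, 1 := sum_le_sum fun i _ => hy i
      _ = Fintype.card ι - 1 := by simp [card_erase_of_mem]
  have := card_le_mul_sum_open hassign hcap
  have := Nat.mul_le_mul_left U hsum
  omega

end CFL

/-- CFL proper-relaxation gap instance: `n` facilities, capacity `U = n²`,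
`(n-1)U + 1` clients, all distances 0, opening costs `f_n = 1`, `f_i = 0` otherwise.
The fractional solution `y_i = 1 (i < n-1)`, `y_n = 1/n²`,
`x_{nj} = (U/n²)/((n-1)U+1)`, `x_{ij} = (1 - x_{nj})/(n-1)` is feasible for the classic
CFL LP and has cost `1/n²`; every integral feasible solution opens facility `n` and
costs at least 1; the integrality gap is at least `n²`. -/
theorem cfl_proper_gap (n : ℕ) (hn : 2 ≤ n) :
    let U : ℕ := n ^ 2
    let C := Fin ((n - 1) * U + 1)
    let lastF : Fin n := ⟨n - 1, by omega⟩
    let y : Fin n → ℝ := fun i => if i = lastF then 1 / (n : ℝ) ^ 2 else 1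
    let xn : ℝ := ((U : ℝ) / (n : ℝ) ^ 2) / (((n : ℝ) - 1) * U + 1)
    let x : Fin n → C → ℝ := fun i _ => if i = lastF then xn else (1 - xn) / ((n : ℝ) - 1)
    let fcost : Fin n → ℝ := fun i => if i = lastF then 1 else 0
    ((∀ i j, x i j ≤ y i) ∧
     (∀ j, ∑ i, x i j = 1) ∧
     (∀ i, ∑ j, x i j ≤ (U : ℝ) * y i) ∧
     (∀ i, 0 ≤ y i ∧ y i ≤ 1) ∧ (∀ i j, 0 ≤ x i j ∧ x i j ≤ 1) ∧
     (∑ i, fcost i * y i = 1 / (n : ℝ) ^ 2)) ∧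
    (∀ yI : Fin n → ℕ, ∀ xI : Fin n → C → ℕ,
      (∀ i, yI i ≤ 1) → (∀ i j, xI i j ≤ yI i) → (∀ j, ∑ i, xI i j = 1) →
      (∀ i, ∑ j, xI i j ≤ U * yI i) →
      yI lastF = 1 ∧ (1 : ℝ) ≤ ∑ i, fcost i * (yI i : ℝ)) ∧
    ((1 : ℝ) / (1 / (n : ℝ) ^ 2) = (n : ℝ) ^ 2) := by
  intro U C lastF y xn x fcost
  have hn₁ : (1 : ℝ) ≤ n - 1 := by
    have : (2 : ℝ) ≤ n := by exact_mod_cast hn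
    linarith
  have hU : (U : ℝ) = (n : ℝ) ^ 2 := by push_cast [U]; rfl
  have hn₂ : (1 : ℝ) ≤ (n : ℝ) ^ 2 := by nlinarith
  have hxn : xn = (((n : ℝ) - 1) * (n : ℝ) ^ 2 + 1)⁻¹ := by
    simp only [xn, hU, div_self (by positivity : (n : ℝ) ^ 2 ≠ 0), one_div]
  have hcardC : (Fintype.card C : ℝ) = ((n : ℝ) - 1) * (n : ℝ) ^ 2 + 1 := by
    simp only [C, U, Fintype.card_fin]; push_cast [Nat.cast_sub (by omega : 1 ≤ n)]; ring
  have hlp : CFL.LPFeasible ((n : ℝ) ^ 2) x y :=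
    CFL.lpFeasible_proper lastF hn₂ hn₁ (by simp) hcardC hxn
  have hcost : ∑ i, fcost i * y i = 1 / (n : ℝ) ^ 2 := by
    simp only [fcost, y, ite_mul, one_mul, zero_mul, Fintype.sum_ite_eq', if_pos]
  refine ⟨⟨hlp.le_open, hlp.sum_assign, hU ▸ hlp.sum_le_capacity, hlp.open_mem_Icc,
    hlp.assign_mem_Icc, hcost⟩, fun yI xI hy _ hassign hcap => ?_, one_div_one_div _⟩
  have hopen : yI lastF = 1 := CFL.open_eq_one_of_mul_card_sub_one_lt hy hassign hcap
    (by simp only [C, Fintype.card_fin, Nat.mul_comm U]; omega) lastF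
  exact ⟨hopen, by simp [fcost, hopen]⟩
end
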